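/- arXiv:1603.07009 — 7 statements merged into one kernel-verified Lean document; each statement's English description precedes it below -/
import Mathlib

section
/- Let q = 3, m ≥ 3, and n = (3^m − 1)/2. Let u ≥ 1 and v ≥ 1 be integers with u + v + 1 = m, and let δ be the integer whose ternary expansion has digit string (0, 2, …, 2, 1, …, 1) consisting of one 0, then u twos, then v ones, i.e., δ = 2·Σ_{i=v}^{m−2} 3^i + Σ_{i=0}^{v−1} 3^i. Then δ is a coset leader modulo n if and only if u ≤ v + 1 (equivalently, u ≤ m/2). -/
/-- The `q`-cyclotomic coset of `s` modulo `n`. -/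
def cosetOf (q n s : ℕ) : Set ℕ := {t | ∃ j : ℕ, t = s * q ^ j % n}

/-- `s` is a coset leader: `s < n` and `s` is the smallest element of its coset. -/
def IsCosetLeader (q n s : ℕ) : Prop := s < n ∧ ∀ j : ℕ, s ≤ s * q ^ j % n

/-!
Since `2n = 3^m - 1`, multiplying by `3` modulo `n` is governed by `3^m ≡ 1`, so only the
exponents `j < m` matter. For each of them `δ·3^j ≡ -c_j (mod n)` with an explicit
`0 < c_j ≤ n`, hence `δ·3^j mod n = n - c_j`, and `δ` is a leader iff `c_j ≤ c_0` for all `j`.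
Doubled, `2c_0 = 3^(u+v) + 3^v`, while `2c_j = 3^(j+v) + 3^(j-1)` for `1 ≤ j ≤ u` and
`2c_j = 3^(j-1) + 3^(j-1-u)` for `u < j < m`. All comparisons hold termwise except at `j = u`,
where `c_u ≤ c_0` reads `3^(u-1) ≤ 3^v`.
-/

theorem two_mul_mod_add_eq_of_dvd {n x T : ℕ} (h : 2 * n ∣ 2 * x + T) (hT : 0 < T)
    (hTn : T ≤ 2 * n) : 2 * (x % n) + T = 2 * n := by
  obtain ⟨c, rfl⟩ : 2 ∣ T := (Nat.dvd_add_right (dvd_mul_right 2 x)).mp (dvd_trans ⟨n, rfl⟩ h)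
  have hdvd : n ∣ x + c := by
    rw [← mul_add] at h
    exact Nat.dvd_of_mul_dvd_mul_left two_pos h
  have hdvd' : n ∣ x % n + c := by
    rw [← Nat.mod_add_div x n, add_right_comm] at hdvd
    exact (Nat.dvd_add_left (dvd_mul_right n _)).mp hdvd
  have := Nat.mod_lt x (show 0 < n by omega)
  have := Nat.eq_of_dvd_of_lt_two_mul (by omega) hdvd' (by omega)
  omega

theorem mul_pow_modEq_mul_pow_mod {q n m : ℕ} (h : q ^ m ≡ 1 [MOD n]) (s j : ℕ) :
    s * q ^ j ≡ s * q ^ (j % m) [MOD n] := by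
  conv_lhs => rw [← Nat.mod_add_div j m, pow_add, pow_mul]
  simpa using ((h.pow (j / m)).mul_left (q ^ (j % m))).mul_left s

theorem isCosetLeader_iff_of_pow_modEq_one {q n m s : ℕ} (hm : 0 < m) (h : q ^ m ≡ 1 [MOD n]) :
    IsCosetLeader q n s ↔ s < n ∧ ∀ j < m, s ≤ s * q ^ j % n := by
  refine and_congr_right fun _ => ⟨fun hs j _ => hs j, fun hs j => ?_⟩
  rw [mul_pow_modEq_mul_pow_mod h s j]
  exact hs _ (Nat.mod_lt j hm)

/-- The number with ternary digit string `0 2…2 1…1`: `u` twos followed by `v` ones. -/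
def twosOnes (u v : ℕ) : ℕ := 2 * ∑ i ∈ Finset.Ico v (u + v), 3 ^ i + ∑ i ∈ Finset.range v, 3 ^ i

theorem two_mul_twosOnes (u v : ℕ) : 2 * twosOnes u v + 3 ^ v + 1 = 2 * 3 ^ (u + v) := by
  have hgeom (k : ℕ) : 2 * ∑ i ∈ Finset.range k, 3 ^ i + 1 = 3 ^ k := by
    have h := geom_sum_mul_add 2 k
    norm_num at h
    linarith
  have hsplit := Finset.sum_range_add_sum_Ico (fun i => 3 ^ i) (Nat.le_add_left v u)
  have := hgeom v
  have := hgeom (u + v)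
  unfold twosOnes
  omega

section Residues

variable {u v n : ℕ}

theorem two_mul_twosOnes_add (hn : 2 * n + 1 = 3 ^ (u + v + 1)) :
    2 * twosOnes u v + (3 ^ (u + v) + 3 ^ v) = 2 * n := by
  have := two_mul_twosOnes u v
  rw [pow_succ] at hn
  omega

theorem twosOnes_lt (hn : 2 * n + 1 = 3 ^ (u + v + 1)) : twosOnes u v < n := by
  have := two_mul_twosOnes_add hn
  have : 0 < 3 ^ v := by positivity
  omega

theorem two_mul_twosOnes_mul_pow_mod_of_lt_left (hn : 2 * n + 1 = 3 ^ (u + v + 1))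
    {s : ℕ} (hs : s < u) :
    2 * (twosOnes u v * 3 ^ (s + 1) % n) + (3 ^ (s + v + 1) + 3 ^ s) = 2 * n := by
  have hδ := two_mul_twosOnes u v
  refine two_mul_mod_add_eq_of_dvd ⟨2 * 3 ^ s, ?_⟩ (by positivity) ?_
  · linear_combination 3 ^ (s + 1) * hδ - 2 * 3 ^ s * hn
  · have : 3 ^ (s + v + 1) ≤ 3 ^ (u + v) := Nat.pow_le_pow_right (by norm_num) (by omega)
    have : 3 ^ s ≤ 3 ^ (u + v) := Nat.pow_le_pow_right (by norm_num) (by omega)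
    rw [pow_succ] at hn
    omega

theorem two_mul_twosOnes_mul_pow_mod_of_lt_right (hn : 2 * n + 1 = 3 ^ (u + v + 1))
    {k : ℕ} (hk : k < v) :
    2 * (twosOnes u v * 3 ^ (u + 1 + k) % n) + (3 ^ (u + k) + 3 ^ k) = 2 * n := by
  have hδ := two_mul_twosOnes u v
  refine two_mul_mod_add_eq_of_dvd ?_ (by positivity) ?_
  · refine Int.natCast_dvd_natCast.mp ⟨3 ^ k * (2 * 3 ^ u - 1), ?_⟩
    zify at hδ hn
    push_cast
    linear_combination (3 : ℤ) ^ (u + 1 + k) * hδ - 3 ^ k * (2 * 3 ^ u - 1) * hn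
  · have := two_mul_twosOnes_add hn
    have : 3 ^ (u + k) ≤ 3 ^ (u + v) := Nat.pow_le_pow_right (by norm_num) (by omega)
    have : 3 ^ k ≤ 3 ^ v := Nat.pow_le_pow_right (by norm_num) hk.le
    omega

theorem forall_le_twosOnes_mul_pow_mod_iff (hn : 2 * n + 1 = 3 ^ (u + v + 1)) :
    (∀ j < u + v + 1, twosOnes u v ≤ twosOnes u v * 3 ^ j % n) ↔ u ≤ v + 1 := by
  have hδ := two_mul_twosOnes_add hn
  constructor
  · intro h
    by_contra! hvu
    obtain ⟨s, rfl⟩ : ∃ s, u = s + 1 := ⟨u - 1, by omega⟩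
    have := h (s + 1) (by omega)
    have := two_mul_twosOnes_mul_pow_mod_of_lt_left hn (Nat.lt_succ_self s)
    have : 3 ^ v < 3 ^ s := Nat.pow_lt_pow_right (by norm_num) (by omega)
    rw [add_right_comm] at hδ
    omega
  · intro huv j hj
    rcases Nat.lt_or_ge u j with hju | hju
    · obtain ⟨k, rfl⟩ : ∃ k, j = u + 1 + k := ⟨j - u - 1, by omega⟩
      have := two_mul_twosOnes_mul_pow_mod_of_lt_right hn (show k < v by omega)
      have : 3 ^ (u + k) ≤ 3 ^ (u + v) := Nat.pow_le_pow_right (by norm_num) (by omega)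
      have : 3 ^ k ≤ 3 ^ v := Nat.pow_le_pow_right (by norm_num) (by omega)
      omega
    · rcases j with _ | s
      · simp [Nat.mod_eq_of_lt (twosOnes_lt hn)]
      · have := two_mul_twosOnes_mul_pow_mod_of_lt_left hn (show s < u by omega)
        have : 3 ^ (s + v + 1) ≤ 3 ^ (u + v) := Nat.pow_le_pow_right (by norm_num) (by omega)
        have : 3 ^ s ≤ 3 ^ v := Nat.pow_le_pow_right (by norm_num) (by omega)
        omega

end Residues

theorem stmt1_general (m n : ℕ) (hn : n = (3 ^ m - 1) / 2)
    (u v : ℕ) (huv : u + v + 1 = m)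
    (δ : ℕ)
    (hδ : δ = 2 * ∑ i ∈ Finset.Ico v (m - 1), 3 ^ i + ∑ i ∈ Finset.range v, 3 ^ i) :
    IsCosetLeader 3 n δ ↔ u ≤ v + 1 := by
  subst huv
  obtain rfl : δ = twosOnes u v := by simpa [twosOnes] using hδ
  have hn' : 2 * n + 1 = 3 ^ (u + v + 1) := by
    have := Nat.two_mul_div_two_add_one_of_odd (Odd.pow (by decide : Odd 3) (n := u + v + 1))
    omega
  have hmod : 3 ^ (u + v + 1) ≡ 1 [MOD n] := by
    rw [← hn', Nat.ModEq, Nat.add_mod, Nat.mul_mod_left, zero_add, Nat.mod_mod]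
  rw [isCosetLeader_iff_of_pow_modEq_one (Nat.succ_pos _) hmod,
    and_iff_right (twosOnes_lt hn')]
  exact forall_le_twosOnes_mul_pow_mod_iff hn'

theorem stmt1 (m n : ℕ) (hm : 3 ≤ m) (hn : n = (3 ^ m - 1) / 2)
    (u v : ℕ) (hu : 1 ≤ u) (hv : 1 ≤ v) (huv : u + v + 1 = m)
    (δ : ℕ)
    (hδ : δ = 2 * ∑ i ∈ Finset.Ico v (m - 1), 3 ^ i + ∑ i ∈ Finset.range v, 3 ^ i) :
    IsCosetLeader 3 n δ ↔ u ≤ v + 1 :=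
  stmt1_general m n hn u v huv δ hδ
end

section
/- Let q = 3, m ≥ 2, and n = (3^m − 1)/2. The largest 3-cyclotomic coset leader modulo n is δ_1 = 3^{m−1} − 1 − (3^{⌊(m−1)/2⌋} − 1)/2, and the cardinality of the coset C_{δ_1} equals m if m is odd and m/2 if m is even. -/
lemma Nat.mod_eq_sub_of_dvd_add {n x c : ℕ} (hc0 : 0 < c) (hcn : c < n) (h : n ∣ x + c) :
    x % n = n - c := by
  have hdvd : n ∣ x % n + c := by
    rwa [Nat.dvd_iff_mod_eq_zero, Nat.mod_add_mod, ← Nat.dvd_iff_mod_eq_zero]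
  obtain ⟨k, hk⟩ := hdvd
  have hlt : x % n < n := Nat.mod_lt x (by omega)
  obtain rfl : k = 1 := by
    rcases k with _ | _ | k
    · omega
    · rfl
    · nlinarith
  omega

lemma Nat.ModEq.pow_mod_modEq_pow {a m k : ℕ} (h : a ^ m ≡ 1 [MOD k]) (c : ℕ) :
    a ^ (c % m) ≡ a ^ c [MOD k] :=
  calc a ^ (c % m) = 1 ^ (c / m) * a ^ (c % m) := by rw [one_pow, one_mul]
    _ ≡ (a ^ m) ^ (c / m) * a ^ (c % m) [MOD k] := ((h.symm.pow _).mul_right _)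
    _ = a ^ c := by rw [← pow_mul, ← pow_add, Nat.div_add_mod]

lemma Nat.exists_pow_mul_lt_le_mul {b n y : ℕ} (hb : 1 < b) (hy0 : 0 < y) (hyn : y < n) :
    ∃ k, b ^ k * y < n ∧ n ≤ b * (b ^ k * y) := by
  have hex : ∃ k, n ≤ b ^ (k + 1) * y :=
    ⟨n, (Nat.lt_pow_self hb).le.trans ((Nat.pow_le_pow_right (by omega) (by omega)).trans
      (Nat.le_mul_of_pos_right _ hy0))⟩
  refine ⟨Nat.find hex, ?_, by simpa [pow_succ, mul_comm, mul_left_comm] using Nat.find_spec hex⟩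
  rcases h : Nat.find hex with _ | k
  · simpa using hyn
  · have := Nat.find_min hex (show k < Nat.find hex by omega)
    omega

lemma Nat.mod_cases_of_lt_two_mul {x m : ℕ} (h : x < 2 * m) :
    (x < m ∧ x % m = x) ∨ (m ≤ x ∧ x % m = x - m) := by
  rcases lt_or_ge x m with hxm | hxm
  · exact .inl ⟨hxm, Nat.mod_eq_of_lt hxm⟩
  · exact .inr ⟨hxm, by rw [Nat.mod_eq_sub_mod hxm, Nat.mod_eq_of_lt (by omega)]⟩

lemma padicValNat_pow_add_pow {p a b : ℕ} [hp : Fact p.Prime] (hp2 : p ≠ 2) (hab : a ≤ b) :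
    padicValNat p (p ^ a + p ^ b) = a := by
  have hsplit : p ^ a + p ^ b = p ^ a * (1 + p ^ (b - a)) := by
    rw [mul_add, mul_one, ← pow_add, Nat.add_sub_cancel' hab]
  have hndvd : ¬ p ∣ 1 + p ^ (b - a) := by
    rcases Nat.eq_zero_or_pos (b - a) with h | h
    · rw [h, pow_zero]
      exact fun hd => hp2 ((Nat.prime_dvd_prime_iff_eq hp.out Nat.prime_two).1 hd)
    · exact fun hd => hp.out.not_dvd_one ((Nat.dvd_add_left (dvd_pow_self p h.ne')).1 hd)
  rw [hsplit, padicValNat.mul (pow_pos hp.out.pos _).ne' (by omega), padicValNat.prime_pow,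
    padicValNat.eq_zero_of_not_dvd hndvd, add_zero]

lemma Nat.pow_add_pow_inj_of_le {p a b c d : ℕ} [hp : Fact p.Prime] (hp2 : p ≠ 2) (hab : a ≤ b)
    (hcd : c ≤ d) (h : p ^ a + p ^ b = p ^ c + p ^ d) : a = c ∧ b = d := by
  have hac : a = c := by
    rw [← padicValNat_pow_add_pow hp2 hab, h, padicValNat_pow_add_pow hp2 hcd]
  subst hac
  exact ⟨rfl, Nat.pow_right_injective hp.out.two_le (show p ^ b = p ^ d by omega)⟩

lemma Nat.pow_add_pow_inj {p a b c d : ℕ} [Fact p.Prime] (hp2 : p ≠ 2)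
    (h : p ^ a + p ^ b = p ^ c + p ^ d) : (a = c ∧ b = d) ∨ (a = d ∧ b = c) := by
  rcases le_total a b with hab | hab <;> rcases le_total c d with hcd | hcd
  · exact .inl (Nat.pow_add_pow_inj_of_le hp2 hab hcd h)
  · exact .inr (Nat.pow_add_pow_inj_of_le hp2 hab hcd (by omega))
  · exact .inr (Nat.pow_add_pow_inj_of_le hp2 hab hcd (by omega)).symm
  · exact .inl (Nat.pow_add_pow_inj_of_le hp2 hab hcd (by omega)).symm

lemma IsCosetLeader.sub_mul_pow_mod_le {q n s : ℕ} (hs : IsCosetLeader q n s) (j : ℕ) :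
    (n - s) * q ^ j % n ≤ n - s := by
  obtain ⟨hsn, hmin⟩ := hs
  have hdvd : n ∣ s * q ^ j + (n - s) * q ^ j % n := by
    rw [Nat.dvd_iff_mod_eq_zero, Nat.add_mod_mod, ← Nat.add_mul, Nat.add_sub_cancel' hsn.le,
      Nat.mul_mod_right]
  have hlt : (n - s) * q ^ j % n < n := Nat.mod_lt _ (by omega)
  generalize (n - s) * q ^ j % n = r at hdvd hlt ⊢
  rcases Nat.eq_zero_or_pos r with hr | hr
  · omega
  have := hmin j
  rw [Nat.mod_eq_sub_of_dvd_add hr hlt hdvd] at this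
  omega

lemma three_pow_add_le_of_le_three_pow_mul {s t k w : ℕ} (hts : 2 * t ≤ s) (hw3 : w % 3 = 1)
    (hw1 : 1 < w) (hwt : w < 3 ^ (t + 1)) (hlo : 3 ^ s ≤ 3 ^ k * w) :
    3 ^ s + 3 ^ t ≤ 3 ^ k * w := by
  have hts' : 3 ^ t ≤ 3 ^ s := Nat.pow_le_pow_right (by norm_num) (by omega)
  rcases lt_or_ge s k with hsk | hks
  · have h1 : 3 ^ (s + 1) ≤ 3 ^ k := Nat.pow_le_pow_right (by norm_num) hsk
    have h2 : 3 ^ k * 2 ≤ 3 ^ k * w := Nat.mul_le_mul_left _ (by omega)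
    rw [pow_succ] at h1
    omega
  have hsplit : 3 ^ s = 3 ^ k * 3 ^ (s - k) := by rw [← pow_add, Nat.add_sub_cancel' hks]
  have hlo' : 3 ^ (s - k) ≤ w :=
    Nat.le_of_mul_le_mul_left (hsplit ▸ hlo) (by positivity)
  have hskt : s - k ≤ t := by
    by_contra! h
    have := Nat.pow_le_pow_right (show 0 < 3 by norm_num) (show t + 1 ≤ s - k by omega)
    omega
  have htk : 3 ^ t ≤ 3 ^ k := Nat.pow_le_pow_right (by norm_num) (by omega)
  rcases hlo'.lt_or_eq with hlt | heq
  · have := Nat.mul_le_mul_left (3 ^ k) (show 3 ^ (s - k) + 1 ≤ w from hlt)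
    rw [mul_add, mul_one, ← hsplit] at this
    omega
  · have hsk0 : s - k ≠ 0 := by
      intro h
      rw [h, pow_zero] at heq
      omega
    have : 3 ∣ w := heq ▸ dvd_pow_self 3 hsk0
    omega

lemma exists_le_two_mul_mul_pow_mod {m n t w : ℕ} (hn : 2 * n + 1 = 3 ^ m) (hm : 1 ≤ m)
    (ht : 2 * t ≤ m - 1) (hw0 : 0 < w) (hwn : w < n) :
    ∃ j, 3 ^ (m - 1) + 3 ^ t ≤ 2 * (w * 3 ^ j % n) := by
  by_contra! H
  have h3m : 3 ^ m = 3 * 3 ^ (m - 1) := by rw [← pow_succ']; congr 1; omega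
  have hTP : 3 ^ t ≤ 3 ^ (m - 1) := Nat.pow_le_pow_right (by norm_num) (by omega)
  have hPodd : 3 ^ (m - 1) % 2 = 1 := Nat.odd_iff.1 (Odd.pow (by decide))
  obtain ⟨k, hzn, hnz⟩ := Nat.exists_pow_mul_lt_le_mul (b := 3) (by norm_num) hw0 hwn
  have hz := H k
  rw [mul_comm w, Nat.mod_eq_of_lt hzn] at hz
  have hy : w * 3 ^ (k + 1) % n = 3 * (3 ^ k * w) - n := by
    rw [show w * 3 ^ (k + 1) = 3 * (3 ^ k * w) by ring, Nat.mod_eq_sub_mod hnz]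
    exact Nat.mod_eq_of_lt (by omega)
  generalize 3 ^ k * w = z at hzn hnz hz hy
  generalize hydef : 3 * z - n = y at hy
  obtain ⟨l, hzn', hnz'⟩ := Nat.exists_pow_mul_lt_le_mul (b := 3) (by norm_num)
    (show 0 < y by omega) (show y < n by omega)
  have hz' := H (k + 1 + l)
  rw [pow_add, ← mul_assoc, ← Nat.mod_mul_mod, hy, mul_comm y, Nat.mod_eq_of_lt hzn'] at hz'
  -- `2 * z = 3 ^ (m - 1) + u` with `u` odd and `u < 3 ^ t`, so `2 * y = 3 * u + 1`
  have hle := three_pow_add_le_of_le_three_pow_mul (k := l) (w := 2 * y) ht (by omega) (by omega)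
    (by rw [pow_succ]; omega) (by rw [mul_left_comm]; omega)
  rw [mul_left_comm] at hle
  omega

/-- `3 ^ (m - 1) + 3 ^ t`, whose `m`-digit ternary expansion is rotated cyclically by `j` places. -/
def rotatedSum (m t j : ℕ) : ℕ := 3 ^ ((m - 1 + j) % m) + 3 ^ ((t + j) % m)

lemma even_rotatedSum (m t j : ℕ) : Even (rotatedSum m t j) :=
  (Odd.pow (by decide)).add_odd (Odd.pow (by decide))

lemma rotatedSum_modEq {m n : ℕ} (hn : 2 * n + 1 = 3 ^ m) (t j : ℕ) :
    rotatedSum m t j ≡ 3 ^ j * (3 ^ (m - 1) + 3 ^ t) [MOD 2 * n] := by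
  have h3m : 3 ^ m ≡ 1 [MOD 2 * n] := by rw [← hn]; exact Nat.add_modEq_left
  calc rotatedSum m t j ≡ 3 ^ (m - 1 + j) + 3 ^ (t + j) [MOD 2 * n] :=
        (h3m.pow_mod_modEq_pow _).add (h3m.pow_mod_modEq_pow _)
    _ = 3 ^ j * (3 ^ (m - 1) + 3 ^ t) := by ring

lemma rotatedSum_le {m : ℕ} (hm : 2 ≤ m) (j : ℕ) :
    rotatedSum m ((m - 1) / 2) j ≤ 3 ^ (m - 1) + 3 ^ ((m - 1) / 2) := by
  set t := (m - 1) / 2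
  have hr : j % m < m := Nat.mod_lt j (by omega)
  rw [rotatedSum, ← Nat.add_mod_mod, ← Nat.add_mod_mod t]
  have hcases : ((m - 1 + j % m) % m = m - 1 ∧ (t + j % m) % m = t) ∨
      ((m - 1 + j % m) % m ≤ t ∧ (t + j % m) % m = m - 1) ∨
      ((m - 1 + j % m) % m ≤ m - 2 ∧ (t + j % m) % m ≤ m - 2) := by
    rcases Nat.mod_cases_of_lt_two_mul (show m - 1 + j % m < 2 * m by omega) with h | h <;>
      rcases Nat.mod_cases_of_lt_two_mul (show t + j % m < 2 * m by omega) with h' | h' <;>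
      omega
  have hmono : ∀ {a b : ℕ}, a ≤ b → 3 ^ a ≤ 3 ^ b := Nat.pow_le_pow_right (by norm_num)
  rcases hcases with ⟨ha, hb⟩ | ⟨ha, hb⟩ | ⟨ha, hb⟩
  · rw [ha, hb]
  · rw [hb, add_comm]
    exact Nat.add_le_add_left (hmono ha) _
  · have h3 : 3 ^ (m - 1) = 3 * 3 ^ (m - 2) := by rw [← pow_succ']; congr 1; omega
    have := hmono ha
    have := hmono hb
    have : 0 < 3 ^ t := by positivity
    omega

lemma rotatedSum_periodic {m : ℕ} (hm : 0 < m) :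
    Function.Periodic (rotatedSum m ((m - 1) / 2)) (if Odd m then m else m / 2) := by
  intro j
  split_ifs with hodd
  · simp only [rotatedSum, ← add_assoc, Nat.add_mod_right]
  · rw [Nat.not_odd_iff_even, Nat.even_iff] at hodd
    rw [rotatedSum, rotatedSum, add_comm]
    congr 2
    · congr 1
      omega
    · rw [show m - 1 + (j + m / 2) = (m - 1) / 2 + j + m by omega, Nat.add_mod_right]

lemma rotatedSum_injOn {m : ℕ} (hm : 2 ≤ m) :
    Set.InjOn (rotatedSum m ((m - 1) / 2)) (Set.Iio (if Odd m then m else m / 2)) := by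
  intro j hj j' hj' h
  simp only [Set.mem_Iio] at hj hj'
  have hN : (m % 2 = 1 ∧ j < m ∧ j' < m) ∨ (m % 2 = 0 ∧ j < m / 2 ∧ j' < m / 2) := by
    split_ifs at hj hj' with hodd
    · exact .inl ⟨Nat.odd_iff.1 hodd, hj, hj'⟩
    · exact .inr ⟨Nat.even_iff.1 (Nat.not_odd_iff_even.1 hodd), hj, hj'⟩
  have hlt : ∀ {a}, a < m → (m - 1) / 2 + a < 2 * m ∧ m - 1 + a < 2 * m := fun _ => by omega
  rcases Nat.pow_add_pow_inj (p := 3) (by norm_num) h with ⟨h1, h2⟩ | ⟨h1, h2⟩ <;>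
    rcases Nat.mod_cases_of_lt_two_mul (hlt (a := j) (by omega)).1 with h3 | h3 <;>
    rcases Nat.mod_cases_of_lt_two_mul (hlt (a := j) (by omega)).2 with h4 | h4 <;>
    rcases Nat.mod_cases_of_lt_two_mul (hlt (a := j') (by omega)).1 with h5 | h5 <;>
    rcases Nat.mod_cases_of_lt_two_mul (hlt (a := j') (by omega)).2 with h6 | h6 <;>
    omega

lemma rotatedSum_lt_two_mul {m n : ℕ} (hn : 2 * n + 1 = 3 ^ m) (hm : 2 ≤ m) (j : ℕ) :
    rotatedSum m ((m - 1) / 2) j < 2 * n := by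
  have h3m : 3 ^ m = 3 * 3 ^ (m - 1) := by rw [← pow_succ']; congr 1; omega
  have : 3 ^ ((m - 1) / 2) ≤ 3 ^ (m - 1) := Nat.pow_le_pow_right (by norm_num) (by omega)
  have : 3 ≤ 3 ^ (m - 1) := Nat.le_self_pow (by omega) 3
  have := rotatedSum_le hm j
  omega

lemma mul_pow_mod_eq {m n δ : ℕ} (hn : 2 * n + 1 = 3 ^ m) (hm : 2 ≤ m)
    (hδ : 2 * δ + 3 ^ (m - 1) + 3 ^ ((m - 1) / 2) = 2 * n) (j : ℕ) :
    δ * 3 ^ j % n = n - rotatedSum m ((m - 1) / 2) j / 2 := by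
  set R := rotatedSum m ((m - 1) / 2) j
  have hR2 : 2 * (R / 2) = R := Nat.two_mul_div_two_of_even (even_rotatedSum _ _ _)
  have hRpos : 2 ≤ R :=
    Nat.add_le_add (Nat.one_le_pow _ _ (by norm_num)) (Nat.one_le_pow _ _ (by norm_num))
  have hRlt := rotatedSum_lt_two_mul hn hm j
  refine Nat.mod_eq_sub_of_dvd_add (by omega) (by omega) (Nat.dvd_of_mul_dvd_mul_left two_pos ?_)
  refine (Nat.modEq_zero_iff_dvd).1 ?_
  calc 2 * (δ * 3 ^ j + R / 2) = 2 * δ * 3 ^ j + R := by rw [mul_add, hR2, mul_assoc]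
    _ ≡ 2 * δ * 3 ^ j + 3 ^ j * (3 ^ (m - 1) + 3 ^ ((m - 1) / 2)) [MOD 2 * n] :=
        (rotatedSum_modEq hn _ j).add_left _
    _ = 2 * n * 3 ^ j := by rw [← hδ]; ring
    _ ≡ 0 [MOD 2 * n] := Nat.modEq_zero_iff_dvd.2 (dvd_mul_right _ _)

lemma isCosetLeader_of_two_mul_add {m n δ : ℕ} (hn : 2 * n + 1 = 3 ^ m) (hm : 2 ≤ m)
    (hδ : 2 * δ + 3 ^ (m - 1) + 3 ^ ((m - 1) / 2) = 2 * n) : IsCosetLeader 3 n δ := by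
  have : 0 < 3 ^ (m - 1) := by positivity
  have : 0 < 3 ^ ((m - 1) / 2) := by positivity
  refine ⟨by omega, fun j => ?_⟩
  rw [mul_pow_mod_eq hn hm hδ]
  have := rotatedSum_le hm j
  omega

lemma IsCosetLeader.le_of_two_mul_add {m n t δ s : ℕ} (hs : IsCosetLeader 3 n s)
    (hn : 2 * n + 1 = 3 ^ m) (hm : 1 ≤ m) (ht : 2 * t ≤ m - 1)
    (hδ : 2 * δ + 3 ^ (m - 1) + 3 ^ t = 2 * n) : s ≤ δ := by
  by_contra! hsδ
  have hsn := hs.1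
  obtain ⟨j, hj⟩ := exists_le_two_mul_mul_pow_mod hn hm ht (w := n - s) (by omega) (by omega)
  have := hs.sub_mul_pow_mod_le j
  omega

lemma ncard_cosetOf {m n δ : ℕ} (hn : 2 * n + 1 = 3 ^ m) (hm : 2 ≤ m)
    (hδ : 2 * δ + 3 ^ (m - 1) + 3 ^ ((m - 1) / 2) = 2 * n) :
    (cosetOf 3 n δ).ncard = if Odd m then m else m / 2 := by
  set N := if Odd m then m else m / 2
  have hN : 0 < N := by unfold N; split_ifs <;> omega
  have hcoset : cosetOf 3 n δ = (fun j => n - rotatedSum m ((m - 1) / 2) j / 2) '' Set.Iio N := by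
    ext x
    simp only [cosetOf, mul_pow_mod_eq hn hm hδ, Set.mem_ofPred_eq, Set.mem_image, Set.mem_Iio]
    constructor
    · rintro ⟨j, rfl⟩
      exact ⟨j % N, Nat.mod_lt _ hN, by rw [(rotatedSum_periodic (by omega)).map_mod_nat]⟩
    · rintro ⟨j, -, rfl⟩
      exact ⟨j, rfl⟩
  rw [hcoset, Set.InjOn.ncard_image, Set.ncard_Iio_nat]
  intro j hj j' hj' h
  refine rotatedSum_injOn hm hj hj' ?_
  have := rotatedSum_lt_two_mul hn hm j
  have := rotatedSum_lt_two_mul hn hm j'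
  have := Nat.even_iff.1 (even_rotatedSum m ((m - 1) / 2) j)
  have := Nat.even_iff.1 (even_rotatedSum m ((m - 1) / 2) j')
  simp only at h
  omega

theorem stmt2 (m n : ℕ) (hm : 2 ≤ m) (hn : n = (3 ^ m - 1) / 2)
    (δ1 : ℕ) (hδ1 : δ1 = 3 ^ (m - 1) - 1 - (3 ^ ((m - 1) / 2) - 1) / 2) :
    IsGreatest {s : ℕ | IsCosetLeader 3 n s} δ1 ∧
      Set.ncard (cosetOf 3 n δ1) = (if Odd m then m else m / 2) := by
  have h3m : 3 ^ m = 3 * 3 ^ (m - 1) := by rw [← pow_succ']; congr 1; omega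
  have hodd : ∀ k, 3 ^ k % 2 = 1 := fun k => Nat.odd_iff.1 (Odd.pow (by decide))
  have hTP : 3 ^ ((m - 1) / 2) ≤ 3 ^ (m - 1) := Nat.pow_le_pow_right (by norm_num) (by omega)
  have hn' : 2 * n + 1 = 3 ^ m := by have := hodd m; omega
  have hδ : 2 * δ1 + 3 ^ (m - 1) + 3 ^ ((m - 1) / 2) = 2 * n := by
    have hP := hodd (m - 1)
    have hT := hodd ((m - 1) / 2)
    rw [hδ1, hn, h3m]
    generalize 3 ^ (m - 1) = P at hP hTP ⊢
    generalize 3 ^ ((m - 1) / 2) = T at hT hTP ⊢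
    omega
  exact ⟨⟨isCosetLeader_of_two_mul_add hn' hm hδ,
    fun s hs => hs.le_of_two_mul_add hn' (by omega) (by omega) hδ⟩, ncard_cosetOf hn' hm hδ⟩
end

section
/- Let q = 3, m ≥ 2, and n = (3^m − 1)/2. The second largest 3-cyclotomic coset leader modulo n (i.e., the maximum of the coset leaders modulo n other than the largest one δ_1 = 3^{m−1} − 1 − (3^{⌊(m−1)/2⌋} − 1)/2) is δ_2 = 3^{m−1} − 1 − (3^{⌊(m+1)/2⌋} − 1)/2, and the cardinality of the coset C_{δ_2} equals m. -/
open Finset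


lemma two_geom (m : ℕ) : 2 * ∑ i ∈ Finset.range m, 3^i + 1 = 3^m := by
  induction m with
  | zero => simp
  | succ t ih => rw [Finset.sum_range_succ, pow_succ]; omega

lemma sum_two_pow (m : ℕ) :
    ∑ i ∈ Finset.range m, 2 * 3^(m-1-i) + 1 = 3^m := by
  have h := Finset.sum_range_reflect (fun i => 2 * 3^i) m
  rw [← two_geom m, Finset.mul_sum, ← h]

lemma pow_mod_one_reduce {n m : ℕ} (hn : 1 < n) (h : 3^m % n = 1) (s j : ℕ) :
    s * 3^j % n = s * 3^(j % m) % n := by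
  conv_lhs => rw [← Nat.div_add_mod j m]
  rw [pow_add, pow_mul, ← mul_assoc, Nat.mul_mod, Nat.mul_mod (s) (3 ^ (j % m))]
  congr 2
  rw [Nat.mul_mod, Nat.pow_mod, h, one_pow, Nat.mod_eq_of_lt hn, mul_one]
  simp

lemma modeq_pow_reduce {m u N : ℕ} (hN : N + 1 = 3^m) (hu : u ≤ m) :
    3^u ≡ 3^(u % m) [MOD N] := by
  rcases Nat.lt_or_ge u m with h | h
  · rw [Nat.mod_eq_of_lt h]
  · have hu' : u = m := le_antisymm hu h
    rw [hu', Nat.mod_self, pow_zero, ← hN]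
    have : (N + 1) % N = 1 % N := by
      rw [Nat.add_mod_left]
    exact this

lemma pow3_lt_aux {u v m : ℕ} (hv : v < m) (huv : u < v) :
    3^u + 3^v + 1 < 3^m := by
  have h1 : 3^u ≤ 3^(v-1) := Nat.pow_le_pow_right (by norm_num) (by omega)
  have h2 : 3^v = 3 * 3^(v-1) := by
    rw [← pow_succ']; congr 1; omega
  have h3 : 3^(v+1) ≤ 3^m := Nat.pow_le_pow_right (by norm_num) (by omega)
  rw [pow_succ] at h3
  have h4 : 1 ≤ 3^(v-1) := Nat.one_le_pow _ _ (by norm_num)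
  omega

lemma pow3_lt {u v m : ℕ} (hu : u < m) (hv : v < m) (huv : u ≠ v) :
    3^u + 3^v + 1 < 3^m := by
  rcases Nat.lt_or_ge u v with h | h
  · exact pow3_lt_aux hv h
  · have : v < u := by omega
    have := pow3_lt_aux hu this
    omega


lemma mod_ne {m u v j : ℕ} (hu : u < m) (hv : v < m) (huv : u ≠ v) :
    (u + j) % m ≠ (v + j) % m := by
  intro h
  have h1 : (u + j) ≡ (v + j) [MOD m] := by
    unfold Nat.ModEq; omega
  have h2 : u ≡ v [MOD m] := Nat.ModEq.add_right_cancel' j h1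
  exact huv (h2.eq_of_lt_of_lt hu hv)

lemma mod_mod_mul (a b N : ℕ) : a * b % N = (a % N) * b % N := by
  rw [Nat.mul_mod, Nat.mul_mod (a % N) b, Nat.mod_mod_of_dvd _ dvd_rfl]

lemma rot_step_abs {N M P Q P3 Q3 A B : ℕ} (hNM : N + 1 = M)
    (hPQ : P + Q + 1 < M) (hAB : A + B + 1 < M) (hA : 1 ≤ A)
    (hP3 : P3 = 3 * P) (hQ3 : Q3 = 3 * Q)
    (hm1 : P3 ≡ A [MOD N]) (hm2 : Q3 ≡ B [MOD N]) :
    (N - P - Q) * 3 % N = N - A - B := by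
  have hXlt : N - A - B < N := by omega
  have e1 : (N - P - Q) * 3 + (P3 + Q3) = 3 * N := by omega
  have e2 : (N - A - B) + (A + B) = N := by omega
  have h3N : 3 * N ≡ N [MOD N] := by
    unfold Nat.ModEq; rw [Nat.mul_mod_left, Nat.mod_self]
  have hcong : (N - P - Q) * 3 + (P3 + Q3) ≡ (N - A - B) + (A + B) [MOD N] := by
    rw [e1, e2]; exact h3N
  have hfin : (N - P - Q) * 3 ≡ N - A - B [MOD N] :=
    Nat.ModEq.add_right_cancel (hm1.add hm2) hcong
  unfold Nat.ModEq at hfin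
  rw [hfin, Nat.mod_eq_of_lt hXlt]

lemma rot_step {m N u v : ℕ} (hm : 1 ≤ m) (hN : N + 1 = 3^m)
    (hu : u < m) (hv : v < m) (huv : u ≠ v) :
    (N - 3^u - 3^v) * 3 % N = N - 3^((u+1)%m) - 3^((v+1)%m) := by
  have hult : (u+1) % m < m := Nat.mod_lt _ (by omega)
  have hvlt : (v+1) % m < m := Nat.mod_lt _ (by omega)
  exact rot_step_abs hN (pow3_lt hu hv huv)
    (pow3_lt hult hvlt (mod_ne hu hv huv (j := 1)))
    (Nat.one_le_pow _ _ (by norm_num))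
    (by rw [pow_succ]; ring) (by rw [pow_succ]; ring)
    (modeq_pow_reduce hN (by omega)) (modeq_pow_reduce hN (by omega))

lemma rot_pow {m N u v : ℕ} (hm : 1 ≤ m) (hN : N + 1 = 3^m)
    (hu : u < m) (hv : v < m) (huv : u ≠ v) (j : ℕ) :
    (N - 3^u - 3^v) * 3^j % N = N - 3^((u+j)%m) - 3^((v+j)%m) := by
  induction j with
  | zero =>
    simp only [pow_zero, mul_one, Nat.add_zero]
    rw [Nat.mod_eq_of_lt hu, Nat.mod_eq_of_lt hv]
    apply Nat.mod_eq_of_lt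
    have h := pow3_lt hu hv huv
    have h1 : 1 ≤ 3^u := Nat.one_le_pow _ _ (by norm_num)
    have h2 : 1 ≤ 3^v := Nat.one_le_pow _ _ (by norm_num)
    omega
  | succ t ih =>
    rw [pow_succ, ← mul_assoc, mod_mod_mul _ 3 N, ih]
    have hu' : (u+t) % m < m := Nat.mod_lt _ (by omega)
    have hv' : (v+t) % m < m := Nat.mod_lt _ (by omega)
    rw [rot_step hm hN hu' hv' (mod_ne hu hv huv)]
    congr 2
    · conv_rhs => rw [show u + (t+1) = (u+t) + 1 by ring]
      rw [Nat.add_mod (u+t) 1 m, Nat.add_mod ((u+t)%m) 1 m,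
        Nat.mod_mod_of_dvd _ dvd_rfl]
    · conv_rhs => rw [show v + (t+1) = (v+t) + 1 by ring]
      rw [Nat.add_mod (v+t) 1 m, Nat.add_mod ((v+t)%m) 1 m,
        Nat.mod_mod_of_dvd _ dvd_rfl]


-- generic digit-sum lemmas
lemma sum_digits_bound2 (m i0 : ℕ) (g : ℕ → ℕ) (hg : ∀ i < m, g i ≤ 2)
    (hi0m : i0 < m) (hi0 : i0 ≠ 0) (h0 : g 0 = 1) (hgi0 : g i0 = 1) (hm : 0 < m) :
    ∑ i ∈ range m, g i * 3^(m-1-i) + 3^(m-1) + 3^(m-1-i0) + 1 ≤ 3^m := by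
  have e0 : (3:ℕ)^(m-1) = ∑ i ∈ range m, (if i = 0 then 3^(m-1-i) else 0) := by
    rw [Finset.sum_ite_eq' (range m) 0 (fun i => 3^(m-1-i))]
    simp [Finset.mem_range.mpr hm]
  have e1 : (3:ℕ)^(m-1-i0) = ∑ i ∈ range m, (if i = i0 then 3^(m-1-i) else 0) := by
    rw [Finset.sum_ite_eq' (range m) i0 (fun i => 3^(m-1-i))]
    simp [Finset.mem_range.mpr hi0m]
  rw [e0, e1, ← Finset.sum_add_distrib, ← Finset.sum_add_distrib]
  have hle : ∑ i ∈ range m, (g i * 3^(m-1-i) + (if i = 0 then 3^(m-1-i) else 0)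
      + (if i = i0 then 3^(m-1-i) else 0)) ≤ ∑ i ∈ range m, 2 * 3^(m-1-i) := by
    apply Finset.sum_le_sum
    intro i hi
    rcases eq_or_ne i 0 with h | h
    · subst h
      simp [hi0 , Ne.symm hi0, h0]
      omega
    · rcases eq_or_ne i i0 with h2 | h2
      · subst h2
        simp [h, hgi0]
        omega
      · simp [h, h2]
        have := hg i (Finset.mem_range.mp hi)
        omega
  have := sum_two_pow m
  omega

lemma sum_digits_exact2 (m i0 : ℕ) (g : ℕ → ℕ)
    (hi0m : i0 < m) (hi0 : i0 ≠ 0) (h0 : g 0 = 1) (hgi0 : g i0 = 1)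
    (hg : ∀ i < m, i ≠ 0 → i ≠ i0 → g i = 2) (hm : 0 < m) :
    ∑ i ∈ range m, g i * 3^(m-1-i) + 3^(m-1) + 3^(m-1-i0) + 1 = 3^m := by
  have e0 : (3:ℕ)^(m-1) = ∑ i ∈ range m, (if i = 0 then 3^(m-1-i) else 0) := by
    rw [Finset.sum_ite_eq' (range m) 0 (fun i => 3^(m-1-i))]
    simp [Finset.mem_range.mpr hm]
  have e1 : (3:ℕ)^(m-1-i0) = ∑ i ∈ range m, (if i = i0 then 3^(m-1-i) else 0) := by
    rw [Finset.sum_ite_eq' (range m) i0 (fun i => 3^(m-1-i))]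
    simp [Finset.mem_range.mpr hi0m]
  rw [e0, e1, ← Finset.sum_add_distrib, ← Finset.sum_add_distrib]
  have he : ∑ i ∈ range m, (g i * 3^(m-1-i) + (if i = 0 then 3^(m-1-i) else 0)
      + (if i = i0 then 3^(m-1-i) else 0)) = ∑ i ∈ range m, 2 * 3^(m-1-i) := by
    apply Finset.sum_congr rfl
    intro i hi
    rcases eq_or_ne i 0 with h | h
    · subst h
      simp [hi0, Ne.symm hi0, h0]
      ring
    · rcases eq_or_ne i i0 with h2 | h2
      · subst h2
        simp [h, hgi0]
        ring
      · simp [h, h2, hg i (Finset.mem_range.mp hi) h h2]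
        try ring
  rw [he]
  have := sum_two_pow m
  omega

lemma sum_digits_exact1 (m : ℕ) (g : ℕ → ℕ) (h0 : g 0 = 1)
    (hg : ∀ i < m, i ≠ 0 → g i = 2) (hm : 0 < m) :
    ∑ i ∈ range m, g i * 3^(m-1-i) + 3^(m-1) + 1 = 3^m := by
  have e0 : (3:ℕ)^(m-1) = ∑ i ∈ range m, (if i = 0 then 3^(m-1-i) else 0) := by
    rw [Finset.sum_ite_eq' (range m) 0 (fun i => 3^(m-1-i))]
    simp [Finset.mem_range.mpr hm]
  rw [e0, ← Finset.sum_add_distrib]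
  have he : ∑ i ∈ range m, (g i * 3^(m-1-i) + (if i = 0 then 3^(m-1-i) else 0))
      = ∑ i ∈ range m, 2 * 3^(m-1-i) := by
    apply Finset.sum_congr rfl
    intro i hi
    rcases eq_or_ne i 0 with h | h
    · subst h; simp [h0]; ring
    · simp [h, hg i (Finset.mem_range.mp hi) h]
  rw [he]
  have := sum_two_pow m
  omega

lemma sum_digits_bound1 (m : ℕ) (g : ℕ → ℕ) (hg : ∀ i < m, g i ≤ 2)
    (h0 : g 0 = 1) (hm : 0 < m) :
    ∑ i ∈ range m, g i * 3^(m-1-i) + 3^(m-1) + 1 ≤ 3^m := by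
  have e0 : (3:ℕ)^(m-1) = ∑ i ∈ range m, (if i = 0 then 3^(m-1-i) else 0) := by
    rw [Finset.sum_ite_eq' (range m) 0 (fun i => 3^(m-1-i))]
    simp [Finset.mem_range.mpr hm]
  rw [e0, ← Finset.sum_add_distrib]
  have hle : ∑ i ∈ range m, (g i * 3^(m-1-i) + (if i = 0 then 3^(m-1-i) else 0))
      ≤ ∑ i ∈ range m, 2 * 3^(m-1-i) := by
    apply Finset.sum_le_sum
    intro i hi
    rcases eq_or_ne i 0 with h | h
    · subst h; simp [h0]; omega
    · simp [h]
      have := hg i (Finset.mem_range.mp hi)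
      omega
  have := sum_two_pow m
  omega

lemma upper (m n s : ℕ) (hm : 2 ≤ m) (h2n : 2 * n + 1 = 3 ^ m)
    (hs : s < n) (hld : ∀ j : ℕ, s ≤ s * 3 ^ j % n)
    (hbig : 2 * n < 2 * s + 3 ^ (m - 1) + 3 ^ (m - m / 2)) :
    2 * s + 3 ^ (m - 1) + 3 ^ (m - 1 - m / 2) = 2 * n := by
  have hone : ∀ k : ℕ, 1 ≤ (3:ℕ)^k := fun k => Nat.one_le_pow _ _ (by norm_num)
  have hodd : ∀ k : ℕ, (3:ℕ)^k % 2 = 1 := fun k => by rw [Nat.pow_mod]; simp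
  have hp1 : (3:ℕ)^m = 3 * 3^(m-1) := by
    conv_lhs => rw [show m = (m-1)+1 by omega]
    rw [pow_succ]; ring
  have hpa : (3:ℕ)^(m - m/2) ≤ 3^(m-1) := Nat.pow_le_pow_right (by norm_num) (by omega)
  have hP1 := hone (m-1)
  have hPa := hone (m - m/2)
  set N := 2 * n with hNdef
  have hN : N + 1 = 3^m := h2n
  have hNpos : 0 < N := by omega
  set x := 2 * s with hxdef
  have hxN : x < N := by omega
  set r : ℕ → ℕ := fun j => x * 3 ^ j % N with hrdef
  set d : ℕ → ℕ := fun j => r j / 3 ^ (m-1) with hddef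
  have hldN : ∀ j, x ≤ r j := by
    intro j
    have h1 := hld j
    have h2 : 2 * (s * 3^j) % (2 * n) = 2 * (s * 3^j % n) := Nat.mul_mod_mul_left 2 _ n
    have h3 : x * 3^j = 2 * (s * 3^j) := by rw [hxdef]; ring
    show x * 3^j % N ≥ x
    rw [h3, hNdef, h2]
    omega
  have hrlt : ∀ j, r j < N := fun j => Nat.mod_lt _ hNpos
  have hr0 : r 0 = x := by
    show x * 3^0 % N = x
    simp [Nat.mod_eq_of_lt hxN]
  have hperiod : ∀ j, r (j + m) = r j := by
    intro j
    show x * 3^(j+m) % N = x * 3^j % N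
    rw [pow_add, ← mul_assoc, ← hN]
    rw [Nat.mul_add, mul_one, mul_comm (x * 3^j) N, Nat.mul_add_mod]
  have hxlow : 3^(m-1) ≤ x := by omega
  have hd2 : ∀ j, d j ≤ 2 := by
    intro j
    show r j / 3^(m-1) ≤ 2
    have h := hrlt j
    have h2 : r j < 3 * 3^(m-1) := by omega
    have h3 : r j / 3^(m-1) < 3 :=
      (Nat.div_lt_iff_lt_mul (show 0 < 3^(m-1) by omega)).mpr (by omega)
    omega
  have hd1 : ∀ j, 1 ≤ d j := by
    intro j
    show 1 ≤ r j / 3^(m-1)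
    have h1 : 3^(m-1) ≤ r j := le_trans hxlow (hldN j)
    exact (Nat.one_le_div_iff (show 0 < 3^(m-1) by omega)).mpr h1
  have hrstep : ∀ j, r (j+1) = r j * 3 % N := by
    intro j
    show x * 3^(j+1) % N = (x * 3^j % N) * 3 % N
    rw [pow_succ, ← mul_assoc, mod_mod_mul]
  have hstep4 : ∀ j, 3 * r j + d j = r (j+1) + d j * 3^m := by
    intro j
    have hdm : 3^(m-1) * d j + r j % 3^(m-1) = r j := Nat.div_add_mod (r j) (3^(m-1))
    set ρ := r j % 3^(m-1) with hrho
    have hrho_lt : ρ < 3^(m-1) := Nat.mod_lt _ (by omega)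
    have hXlt : 3 * ρ + d j < N := by
      have h2 := hd2 j
      have h3 := hrlt j
      -- if 3ρ + d j = N then r j = N
      by_contra hc
      push_neg at hc
      have h6 : ρ = 3^(m-1) - 1 ∧ d j = 2 := by omega
      rw [h6.1, h6.2] at hdm
      omega
    have hkey : r (j+1) = 3 * ρ + d j := by
      rw [hrstep j]
      have e : r j * 3 = d j * N + (3 * ρ + d j) := by
        have : r j * 3 = (3^(m-1) * d j + ρ) * 3 := by rw [hdm]
        rw [this]
        have e2 : (3^(m-1) * d j + ρ) * 3 = d j * (3 * 3^(m-1)) + 3 * ρ := by ring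
        rw [e2, ← hp1, ← hN]
        ring
      rw [e, mul_comm (d j) N, Nat.mul_add_mod, Nat.mod_eq_of_lt hXlt]
    rw [hkey]
    -- 3 * r j + d j = (3ρ + d j) + d j * 3^m,  with r j = P * d j + ρ, 3^m = 3P
    have hdm' : ((3:ℤ)^(m-1)) * d j + (ρ:ℤ) = r j := by exact_mod_cast hdm
    have hp1' : ((3:ℤ)^m) = 3 * 3^(m-1) := by exact_mod_cast hp1
    zify
    linear_combination (-3:ℤ) * hdm' - (d j : ℤ) * hp1'
  -- digit sum machinery
  set S : ℕ → ℕ → ℕ := fun j t => ∑ i ∈ range t, d (j+i) * 3^(t-1-i) with hSdef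
  have htel : ∀ j t, 3^t * r j + S j t = r (j+t) + 3^m * S j t := by
    intro j t
    induction t with
    | zero => simp [hSdef]
    | succ t ih =>
      have hS : S j (t+1) = 3 * S j t + d (j+t) := by
        show ∑ i ∈ range (t+1), d (j+i) * 3^(t-i) = 3 * ∑ i ∈ range t, d (j+i) * 3^(t-1-i) + d (j+t)
        rw [Finset.sum_range_succ, Nat.sub_self, pow_zero, mul_one, Finset.mul_sum]
        congr 1
        apply Finset.sum_congr rfl
        intro i hi
        have hi' : i < t := Finset.mem_range.mp hi
        have : (3:ℕ)^(t-i) = 3 * 3^(t-1-i) := by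
          rw [show t - i = (t-1-i)+1 by omega, pow_succ]; ring
        rw [this]; ring
      have hstep := hstep4 (j+t)
      have hjt : j + (t+1) = (j+t)+1 := by ring
      rw [hS, hjt, pow_succ]
      have ih' : ((3:ℤ)^t) * r j + S j t = r (j+t) + (3:ℤ)^m * S j t := by exact_mod_cast ih
      have hstep' : (3:ℤ) * r (j+t) + d (j+t) = r ((j+t)+1) + (d (j+t) : ℤ) * 3^m := by
        exact_mod_cast hstep
      zify
      linear_combination (3:ℤ) * ih' + hstep'
  have hsum : ∀ j, r j = S j m := by
    intro j
    have h1 := htel j m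
    rw [hperiod j] at h1
    have h9 : (9:ℕ) ≤ 3^m := by
      calc (9:ℕ) = 3^2 := by norm_num
      _ ≤ 3^m := Nat.pow_le_pow_right (by norm_num) hm
    have h2 : ((3:ℤ)^m) * (r j) + S j m = r j + ((3:ℤ)^m) * S j m := by
      exact_mod_cast h1
    have h3 : (((3:ℤ)^m) - 1) * (r j) = (((3:ℤ)^m) - 1) * (S j m) := by
      linear_combination h2
    have h4 : (((3:ℤ)^m) - 1) ≠ 0 := by
      have h9' : ((9:ℤ)) ≤ ((3:ℤ)^m) := by exact_mod_cast h9
      omega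
    have h5 : ((r j : ℤ)) = ((S j m : ℤ)) := mul_left_cancel₀ h4 h3
    exact_mod_cast h5
  have hBnd2 : ∀ j i0, 0 < i0 → i0 < m → d j = 1 → d (j+i0) = 1 →
      r j + 3^(m-1) + 3^(m-1-i0) + 1 ≤ 3^m := by
    intro j i0 h0 him ha hb
    have hb2 := sum_digits_bound2 m i0 (fun i => d (j+i)) (fun i _ => hd2 (j+i)) him
      (by omega) (by simpa using ha) hb (by omega)
    rw [hsum j]
    simpa using hb2
  have hBnd1 : ∀ j, d j = 1 → r j + 3^(m-1) + 1 ≤ 3^m := by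
    intro j ha
    have hb1 := sum_digits_bound1 m (fun i => d (j+i)) (fun i _ => hd2 (j+i))
      (by simpa using ha) (by omega)
    rw [hsum j]
    simpa using hb1
  have hgap : ∀ j i, 0 < i → i < m/2 → d j = 1 → d (j+i) = 1 → False := by
    intro j i h0 hiD ha hb
    have hb2 := hBnd2 j i h0 (by omega) ha hb
    have hmono : (3:ℕ)^(m - m/2) ≤ 3^(m-1-i) := Nat.pow_le_pow_right (by norm_num) (by omega)
    have hl := hldN j
    omega
  have hd0 : d 0 = 1 := by
    by_contra hc
    have hc2 : d 0 = 2 := by have := hd1 0; have := hd2 0; omega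
    have hex : ∃ i, i < m ∧ d i = 1 := by
      by_contra hno
      push_neg at hno
      have hS2 : S 0 m = ∑ i ∈ range m, 2 * 3^(m-1-i) := by
        apply Finset.sum_congr rfl
        intro i hi
        have h1 := hd1 (0+i)
        have h2 := hd2 (0+i)
        have h3 := hno (0+i) (by simpa using Finset.mem_range.mp hi)
        have : d (0+i) = 2 := by omega
        rw [this]
      have h2 := sum_two_pow m
      have h3 := hsum 0
      rw [hr0] at h3
      omega
    obtain ⟨i1, hi1m, hdi1⟩ := hex
    have hb1 := hBnd1 i1 hdi1
    have hx2 : 2 * 3^(m-1) ≤ x := by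
      rw [← hr0]
      have h2 : 2 ≤ r 0 / 3^(m-1) := le_of_eq hc2.symm
      exact (Nat.le_div_iff_mul_le (show 0 < 3^(m-1) by omega)).mp h2
    have hl := hldN i1
    omega
  have hsecond : ∃ i2, 0 < i2 ∧ i2 < m ∧ d i2 = 1 := by
    by_contra hno
    push_neg at hno
    have he := sum_digits_exact1 m (fun i => d (0+i)) (by simpa using hd0)
      (fun i hi h0 => by
        have h1 := hd1 (0+i)
        have h2 := hd2 (0+i)
        have h3 := hno i (by omega) hi
        simp only [Nat.zero_add] at h1 h2 ⊢
        omega) (by omega)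
    have h3 := hsum 0
    rw [hr0] at h3
    have hSS : S 0 m = ∑ i ∈ range m, d (0+i) * 3^(m-1-i) := rfl
    have ho1 := hodd (m-1)
    have ho2 := hodd m
    omega
  have hdm0 : d m = 1 := by
    have hpm : r m = r 0 := by
      have := hperiod 0
      simpa using this
    show r m / 3^(m-1) = 1
    rw [hpm]
    exact hd0
  have hthird : ∀ i2 i3, 0 < i2 → i2 < i3 → i3 < m → d i2 = 1 → d i3 = 1 → False := by
    intro i2 i3 h2 h23 h3m hdi2 hdi3
    have g1 : ¬ (i2 < m/2) := fun h => hgap 0 i2 h2 h hd0 (by simpa using hdi2)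
    have g2 : ¬ (i3 - i2 < m/2) := fun h => hgap i2 (i3-i2) (by omega) h hdi2
      (by rw [show i2 + (i3-i2) = i3 by omega]; exact hdi3)
    have g3 : ¬ (m - i3 < m/2) := fun h => hgap i3 (m-i3) (by omega) h hdi3
      (by rw [show i3 + (m-i3) = m by omega]; exact hdm0)
    rcases Nat.lt_or_ge m 4 with h4 | h4
    · rcases (show m = 2 ∨ m = 3 by omega) with hm2 | hm3
      · omega
      · have e2 : i2 = 1 := by omega
        have e3 : i3 = 2 := by omega
        have h3' := hsum 0
        rw [hr0] at h3'
        have hS3 : S 0 m = d 0 * 3^(m-1) + d (0+1) * 3^(m-1-1) + d (0+2) * 3^(m-1-2) := by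
          rw [hSdef]
          simp only [hm3]
          rw [Finset.sum_range_succ, Finset.sum_range_succ, Finset.sum_range_succ,
            Finset.sum_range_zero]
          norm_num
        rw [hS3] at h3'
        simp only [hm3] at h3'
        norm_num at h3'
        have hd1' : d 1 = 1 := by rwa [e2] at hdi2
        have hd2'' : d 2 = 1 := by rwa [e3] at hdi3
        rw [hd0, hd1', hd2''] at h3'
        omega
    · omega
  obtain ⟨i2, hi2pos, hi2m, hdi2⟩ := hsecond
  have huniq : ∀ i, i < m → i ≠ 0 → i ≠ i2 → d i = 2 := by
    intro i him hi0 hii2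
    by_contra hc
    have honei : d i = 1 := by have := hd1 i; have := hd2 i; omega
    rcases Nat.lt_or_ge i i2 with h | h
    · exact hthird i i2 (by omega) h hi2m honei hdi2
    · exact hthird i2 i hi2pos (by omega) him hdi2 honei
  have hx_exact : x + 3^(m-1) + 3^(m-1-i2) + 1 = 3^m := by
    have he := sum_digits_exact2 m i2 (fun i => d (0+i)) hi2m (by omega)
      (by simpa using hd0) (by simpa using hdi2)
      (fun i hi h0 h2 => by
        have := huniq i hi h0 h2
        simpa using this) (by omega)
    have h3 := hsum 0
    rw [hr0] at h3
    have hSS : S 0 m = ∑ i ∈ range m, d (0+i) * 3^(m-1-i) := rfl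
    omega
  have hu : m-1 < m := by omega
  have hv : m-1-i2 < m := by omega
  have huv : m-1 ≠ m-1-i2 := by omega
  have hxeq : x = N - 3^(m-1) - 3^(m-1-i2) := by
    have := hone (m-1-i2)
    omega
  have hri2 : r i2 = N - 3^(i2-1) - 3^(m-1) := by
    show x * 3^i2 % N = _
    rw [hxeq, rot_pow (show 1 ≤ m by omega) hN hu hv huv i2]
    congr 2
    · rw [show m-1+i2 = m + (i2-1) by omega, Nat.add_mod_left,
        Nat.mod_eq_of_lt (show i2-1 < m by omega)]
    · rw [show m-1-i2+i2 = m-1 by omega, Nat.mod_eq_of_lt (show m-1 < m by omega)]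
  have hcmp := hldN i2
  rw [hri2] at hcmp
  have hb1 : 3^(i2-1) + 3^(m-1) + 1 < 3^m := pow3_lt (by omega) hu (by omega)
  have hple : (3:ℕ)^(i2-1) ≤ 3^(m-1-i2) := by
    have h1 := hone (i2-1)
    have h2 := hone (m-1-i2)
    omega
  have hi2le : i2 - 1 ≤ m-1-i2 := (Nat.pow_le_pow_iff_right (by norm_num)).mp hple
  have hi2D : ¬ (i2 < m/2) := fun h => hgap 0 i2 hi2pos h hd0 (by simpa using hdi2)
  have hi2eq : i2 = m/2 := by omega
  rw [hi2eq] at hx_exact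
  omega


lemma mod_two_range {w m : ℕ} (hm : 0 < m) (hw : w < 2*m) :
    (w % m = w ∧ w < m) ∨ (w % m = w - m ∧ m ≤ w) := by
  rcases Nat.lt_or_ge w m with h | h
  · exact Or.inl ⟨Nat.mod_eq_of_lt h, h⟩
  · right
    refine ⟨?_, h⟩
    rw [show w = m + (w - m) by omega, Nat.add_mod_left, Nat.mod_eq_of_lt (by omega)]
    omega

lemma pow3_add_inj' {u v p q : ℕ} (huv : u < v) (hpq : p < q)
    (h : 3^u + 3^v = 3^p + 3^q) : u = p ∧ v = q := by
  have hvq : v = q := by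
    by_contra hne
    rcases Nat.lt_or_ge v q with hlt | hgt
    · have h1 : 3^u ≤ 3^(v-1) := Nat.pow_le_pow_right (by norm_num) (by omega)
      have h2 : (3:ℕ)^v = 3 * 3^(v-1) := by
        rw [← pow_succ']; congr 1; omega
      have h3 : 3^(v+1) ≤ 3^q := Nat.pow_le_pow_right (by norm_num) (by omega)
      rw [pow_succ] at h3
      have h4 : (1:ℕ) ≤ 3^p := Nat.one_le_pow _ _ (by norm_num)
      omega
    · have hqv : q < v := by omega
      have h1 : 3^p ≤ 3^(q-1) := Nat.pow_le_pow_right (by norm_num) (by omega)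
      have h2 : (3:ℕ)^q = 3 * 3^(q-1) := by
        rw [← pow_succ']; congr 1; omega
      have h3 : 3^(q+1) ≤ 3^v := Nat.pow_le_pow_right (by norm_num) (by omega)
      rw [pow_succ] at h3
      have h4 : (1:ℕ) ≤ 3^u := Nat.one_le_pow _ _ (by norm_num)
      omega
  subst hvq
  have : (3:ℕ)^u = 3^p := by omega
  exact ⟨Nat.pow_right_injective (by norm_num) this, rfl⟩

lemma pow3_add_inj {u v p q : ℕ} (huv : u ≠ v) (hpq : p ≠ q)
    (h : 3^u + 3^v = 3^p + 3^q) : (u = p ∧ v = q) ∨ (u = q ∧ v = p) := by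
  rcases Nat.lt_or_ge u v with h1 | h1
  · rcases Nat.lt_or_ge p q with h2 | h2
    · exact Or.inl (pow3_add_inj' h1 h2 h)
    · have h2' : q < p := by omega
      have := pow3_add_inj' h1 h2' (by omega)
      exact Or.inr ⟨this.1, this.2⟩
  · have h1' : v < u := by omega
    rcases Nat.lt_or_ge p q with h2 | h2
    · have := pow3_add_inj' h1' h2 (by omega)
      exact Or.inr ⟨this.2, this.1⟩
    · have h2' : q < p := by omega
      have := pow3_add_inj' h1' h2' (by omega)
      exact Or.inl ⟨this.2, this.1⟩

-- δ2 is a coset leader, for m ≥ 4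
lemma memA (m n δ : ℕ) (hm : 4 ≤ m) (h2n : 2*n + 1 = 3^m)
    (h2 : 2*δ + 3^(m-1) + 3^(m - m/2) = 2*n) : IsCosetLeader 3 n δ := by
  have hone : ∀ k : ℕ, 1 ≤ (3:ℕ)^k := fun k => Nat.one_le_pow _ _ (by norm_num)
  have hp1 : (3:ℕ)^m = 3 * 3^(m-1) := by
    conv_lhs => rw [show m = (m-1)+1 by omega]
    rw [pow_succ]; ring
  have hp2 : (3:ℕ)^(m-1) = 3 * 3^(m-2) := by
    conv_lhs => rw [show m-1 = (m-2)+1 by omega]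
    rw [pow_succ]; ring
  have hP1 := hone (m-1)
  have hPa := hone (m - m/2)
  constructor
  · omega
  intro j
  set N := 2*n with hNdef
  have hN : N + 1 = 3^m := h2n
  have ha1 : m - m/2 < m := by omega
  have ha2 : m - m/2 ≠ m - 1 := by omega
  have hu : m - 1 < m := by omega
  have hδeq : 2*δ = N - 3^(m-1) - 3^(m - m/2) := by omega
  have htrans : 2 * (δ * 3^j % n) = (2*δ) * 3^j % N := by
    rw [hNdef, show (2*δ) * 3^j = 2 * (δ * 3^j) by ring, Nat.mul_mod_mul_left]
  have hrot := rot_pow (show 1 ≤ m by omega) hN hu ha1 (by omega) j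
  rw [← hδeq] at hrot
  -- now bound: 3^((m-1+j)%m) + 3^((m-m/2+j)%m) ≤ 3^(m-1) + 3^(m-m/2)
  set u := (m-1+j) % m with hudef
  set v := (m - m/2 + j) % m with hvdef
  have hum : u < m := Nat.mod_lt _ (by omega)
  have hvm : v < m := Nat.mod_lt _ (by omega)
  have huv : u ≠ v := mod_ne hu ha1 (by omega)
  have hsum : 3^u + 3^v + 1 < 3^m := pow3_lt hum hvm huv
  obtain ⟨k, hk⟩ : ∃ k, k = j % m := ⟨_, rfl⟩
  have hkm : k < m := hk ▸ Nat.mod_lt _ (by omega)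
  have hu' : u = (m-1+k) % m := by
    rw [hudef, Nat.add_mod, ← hk, Nat.mod_eq_of_lt hu]
  have hv' : v = (m - m/2 + k) % m := by
    rw [hvdef, Nat.add_mod, ← hk, Nat.mod_eq_of_lt ha1]
  have hucase := mod_two_range (show 0 < m by omega) (show m-1+k < 2*m by omega)
  have hvcase := mod_two_range (show 0 < m by omega) (show m - m/2 + k < 2*m by omega)
  rw [← hu'] at hucase
  rw [← hv'] at hvcase
  have hbound : 3^u + 3^v ≤ 3^(m-1) + 3^(m - m/2) := by
    rcases hucase with ⟨hue, hul⟩ | ⟨hue, hul⟩ <;> rcases hvcase with ⟨hve, hvl⟩ | ⟨hve, hvl⟩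
    · -- k = 0
      rw [show u = m-1 by omega, show v = m - m/2 by omega]
    · omega
    · rcases Nat.lt_or_ge v (m-1) with hv2 | hv2
      · have b1 : (3:ℕ)^u ≤ 3^(m-2) := Nat.pow_le_pow_right (by norm_num) (by omega)
        have b2 : (3:ℕ)^v ≤ 3^(m-2) := Nat.pow_le_pow_right (by norm_num) (by omega)
        omega
      · rw [show v = m-1 by omega]
        have b1 : (3:ℕ)^u ≤ 3^(m - m/2) := Nat.pow_le_pow_right (by norm_num) (by omega)
        omega
    · have b1 : (3:ℕ)^u ≤ 3^(m-2) := Nat.pow_le_pow_right (by norm_num) (by omega)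
      have b2 : (3:ℕ)^v ≤ 3^(m-2) := Nat.pow_le_pow_right (by norm_num) (by omega)
      omega
  have hfin : 2*δ ≤ (2*δ) * 3^j % N := by
    rw [hrot]
    omega
  omega

lemma coset_eq_image (n m s : ℕ) (hn : 1 < n) (hm : 0 < m) (h3 : 3^m % n = 1) :
    cosetOf 3 n s = ↑((Finset.range m).image (fun k => s * 3^k % n)) := by
  ext t
  simp only [cosetOf, Set.mem_setOf_eq, Finset.coe_image, Set.mem_image, Finset.mem_coe,
    Finset.mem_range]
  constructor
  · rintro ⟨j, rfl⟩
    exact ⟨j % m, Nat.mod_lt _ hm, (pow_mod_one_reduce hn h3 s j).symm⟩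
  · rintro ⟨k, _, rfl⟩
    exact ⟨k, rfl⟩

lemma cardA (m n δ : ℕ) (hm : 4 ≤ m) (h2n : 2*n + 1 = 3^m)
    (h2 : 2*δ + 3^(m-1) + 3^(m - m/2) = 2*n) :
    Set.ncard (cosetOf 3 n δ) = m := by
  have hone : ∀ k : ℕ, 1 ≤ (3:ℕ)^k := fun k => Nat.one_le_pow _ _ (by norm_num)
  have hp1 : (3:ℕ)^m = 3 * 3^(m-1) := by
    conv_lhs => rw [show m = (m-1)+1 by omega]
    rw [pow_succ]; ring
  have hP1 := hone (m-1)
  have hPa := hone (m - m/2)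
  have h81 : (81:ℕ) ≤ 3^m := by
    calc (81:ℕ) = 3^4 := by norm_num
    _ ≤ 3^m := Nat.pow_le_pow_right (by norm_num) hm
  have hn1 : 1 < n := by omega
  have h3m : 3^m % n = 1 := by
    rw [← h2n, show 2*n + 1 = 1 + n*2 by ring, Nat.add_mul_mod_self_left]
    exact Nat.mod_eq_of_lt hn1
  rw [coset_eq_image n m δ hn1 (by omega) h3m, Set.ncard_coe_finset]
  rw [Finset.card_image_of_injOn, Finset.card_range]
  intro k hk l hl hkl
  simp only [Finset.coe_range, Set.mem_Iio] at hk hl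
  simp only [] at hkl
  -- transfer to N level
  set N := 2*n with hNdef
  have hN : N + 1 = 3^m := h2n
  have ha1 : m - m/2 < m := by omega
  have hu : m - 1 < m := by omega
  have hδeq : 2*δ = N - 3^(m-1) - 3^(m - m/2) := by omega
  have htr : ∀ j : ℕ, 2 * (δ * 3^j % n) = (2*δ) * 3^j % N := by
    intro j
    rw [hNdef, show (2*δ) * 3^j = 2 * (δ * 3^j) by ring, Nat.mul_mod_mul_left]
  have hrotk := rot_pow (show 1 ≤ m by omega) hN hu ha1 (by omega) k
  have hrotl := rot_pow (show 1 ≤ m by omega) hN hu ha1 (by omega) l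
  rw [← hδeq] at hrotk hrotl
  have hek : 2 * (δ * 3^k % n) = N - 3^((m-1+k)%m) - 3^((m - m/2+k)%m) := by
    rw [htr k, hrotk]
  have hel : 2 * (δ * 3^l % n) = N - 3^((m-1+l)%m) - 3^((m - m/2+l)%m) := by
    rw [htr l, hrotl]
  rw [hkl] at hek
  -- so the two (N - ...) agree
  have huk : (m-1+k)%m < m := Nat.mod_lt _ (by omega)
  have hvk : (m - m/2+k)%m < m := Nat.mod_lt _ (by omega)
  have hul : (m-1+l)%m < m := Nat.mod_lt _ (by omega)
  have hvl : (m - m/2+l)%m < m := Nat.mod_lt _ (by omega)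
  have hneqk : (m-1+k)%m ≠ (m - m/2+k)%m := mod_ne hu ha1 (by omega)
  have hneql : (m-1+l)%m ≠ (m - m/2+l)%m := mod_ne hu ha1 (by omega)
  have hsk := pow3_lt huk hvk hneqk
  have hsl := pow3_lt hul hvl hneql
  have hsum_eq : 3^((m-1+k)%m) + 3^((m - m/2+k)%m)
      = 3^((m-1+l)%m) + 3^((m - m/2+l)%m) := by
    have b1 := hone ((m-1+k)%m); have b2 := hone ((m - m/2+k)%m)
    have b3 := hone ((m-1+l)%m); have b4 := hone ((m - m/2+l)%m)
    omega
  have hinj := pow3_add_inj hneqk hneql hsum_eq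
  -- explicit formulas
  have hmod : ∀ w : ℕ, w < m → ((m-1+w)%m = m-1+w ∧ m-1+w < m ∨ (m-1+w)%m = w-1 ∧ m ≤ m-1+w)
      ∧ ((m - m/2+w)%m = m - m/2 + w ∧ m - m/2 + w < m
         ∨ (m - m/2+w)%m = m - m/2 + w - m ∧ m ≤ m - m/2 + w) := by
    intro w hw
    constructor
    · have := mod_two_range (show 0 < m by omega) (show m-1+w < 2*m by omega)
      omega
    · have := mod_two_range (show 0 < m by omega) (show m - m/2 + w < 2*m by omega)
      omega
  have hmk := hmod k hk
  have hml := hmod l hl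
  rcases hinj with ⟨e1, e2⟩ | ⟨e1, e2⟩
  · omega
  · omega

lemma mem2 : IsCosetLeader 3 4 1 := by
  constructor
  · norm_num
  intro j
  rw [pow_mod_one_reduce (show (1:ℕ) < 4 by norm_num) (show 3^2 % 4 = 1 by norm_num) 1 j]
  rcases (show j % 2 = 0 ∨ j % 2 = 1 by omega) with h | h <;> rw [h] <;> norm_num

lemma mem3 : IsCosetLeader 3 13 4 := by
  constructor
  · norm_num
  intro j
  rw [pow_mod_one_reduce (show (1:ℕ) < 13 by norm_num) (show 3^3 % 13 = 1 by norm_num) 4 j]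
  rcases (show j % 3 = 0 ∨ j % 3 = 1 ∨ j % 3 = 2 by omega) with h | h | h <;> rw [h] <;> norm_num

lemma card2 : Set.ncard (cosetOf 3 4 1) = 2 := by
  rw [coset_eq_image 4 2 1 (by norm_num) (by norm_num) (by norm_num), Set.ncard_coe_finset]
  decide

lemma card3 : Set.ncard (cosetOf 3 13 4) = 3 := by
  rw [coset_eq_image 13 3 4 (by norm_num) (by norm_num) (by norm_num), Set.ncard_coe_finset]
  decide


theorem stmt3 (m n : ℕ) (hm : 2 ≤ m) (hn : n = (3 ^ m - 1) / 2)
    (δ1 : ℕ) (hδ1 : δ1 = 3 ^ (m - 1) - 1 - (3 ^ ((m - 1) / 2) - 1) / 2)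
    (δ2 : ℕ) (hδ2 : δ2 = 3 ^ (m - 1) - 1 - (3 ^ ((m + 1) / 2) - 1) / 2) :
    IsGreatest ({s : ℕ | IsCosetLeader 3 n s} \ {δ1}) δ2 ∧
      Set.ncard (cosetOf 3 n δ2) = m := by
  have hone : ∀ k : ℕ, 1 ≤ (3:ℕ)^k := fun k => Nat.one_le_pow _ _ (by norm_num)
  have hodd : ∀ k : ℕ, (3:ℕ)^k % 2 = 1 := fun k => by rw [Nat.pow_mod]; simp
  have hmono : ∀ a b : ℕ, a ≤ b → (3:ℕ)^a ≤ 3^b :=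
    fun a b h => Nat.pow_le_pow_right (by norm_num) h
  have hM : 2*n + 1 = 3^m := by
    have h1 := hodd m
    have h2 := hone m
    omega
  have hp1 : (3:ℕ)^m = 3 * 3^(m-1) := by
    conv_lhs => rw [show m = (m-1)+1 by omega]
    rw [pow_succ]; ring
  have he1 : m - 1 - m/2 = (m-1)/2 := by omega
  have he2 : m - m/2 = (m+1)/2 := by omega
  have hq : (3:ℕ)^((m+1)/2) = 3 * 3^((m-1)/2) := by
    rw [show (m+1)/2 = (m-1)/2 + 1 by omega, pow_succ]; ring
  have hoq := hodd ((m-1)/2)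
  have hor := hodd ((m+1)/2)
  have hbq : (3:ℕ)^((m-1)/2) ≤ 3^(m-1) := hmono _ _ (by omega)
  have hbr : (3:ℕ)^((m+1)/2) ≤ 3^(m-1) := hmono _ _ (by omega)
  have hQ1 := hone ((m-1)/2)
  have hR1 := hone ((m+1)/2)
  have hP1 := hone (m-1)
  have h1add : 2*δ1 + 3^(m-1) + 3^(m-1-m/2) = 2*n := by
    rw [he1]; omega
  have h2add : 2*δ2 + 3^(m-1) + 3^(m - m/2) = 2*n := by
    rw [he2]; omega
  have hrel : (3:ℕ)^(m - m/2) = 3 * 3^(m-1-m/2) := by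
    rw [he2, he1]; exact hq
  have hQ1' := hone (m-1-m/2)
  have hδlt : δ2 < δ1 := by omega
  refine ⟨⟨⟨?_, ?_⟩, ?_⟩, ?_⟩
  · -- δ2 is a coset leader
    show IsCosetLeader 3 n δ2
    rcases (show m = 2 ∨ m = 3 ∨ 4 ≤ m by omega) with h | h | h
    · subst h
      norm_num at h2add hM
      have hn4 : n = 4 := by omega
      have hd1' : δ2 = 1 := by omega
      rw [hn4, hd1']
      exact mem2
    · subst h
      norm_num at h2add hM
      have hn13 : n = 13 := by omega
      have hd4 : δ2 = 4 := by omega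
      rw [hn13, hd4]
      exact mem3
    · exact memA m n δ2 h hM h2add
  · -- δ2 ∉ {δ1}
    simp only [Set.mem_singleton_iff]
    omega
  · -- upper bound
    rintro s ⟨hs1, hs2⟩
    simp only [Set.mem_setOf_eq] at hs1
    simp only [Set.mem_singleton_iff] at hs2
    by_contra hle
    push_neg at hle
    obtain ⟨hslt, hsld⟩ := hs1
    have hup := upper m n s hm hM hslt hsld (by omega)
    exact hs2 (by omega)
  · -- cardinality
    rcases (show m = 2 ∨ m = 3 ∨ 4 ≤ m by omega) with h | h | h
    · subst h
      norm_num at h2add hM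
      have hn4 : n = 4 := by omega
      have hd1' : δ2 = 1 := by omega
      rw [hn4, hd1']
      exact card2
    · subst h
      norm_num at h2add hM
      have hn13 : n = 13 := by omega
      have hd4 : δ2 = 4 := by omega
      rw [hn13, hd4]
      exact card3
    · exact cardA m n δ2 h hM h2add
end

section
/- Let q = 3, m ≥ 4, and n = (3^m − 1)/2. For every i with 1 ≤ i ≤ ⌈m/4⌉, the i-th largest 3-cyclotomic coset leader modulo n is δ_i = 3^{m−1} − 1 − (3^{⌊(m−3)/2⌋ + i} − 1)/2. -/
/-- Read as a word of `m` base-`b` digits, `v` is the largest of its cyclic rotations: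
multiplication by `b` modulo `b ^ m - 1` shifts the digits cyclically. -/
def IsMaxRotation (b m v : ℕ) : Prop := ∀ j, v * b ^ j % (b ^ m - 1) ≤ v

theorem pos_of_lt_pow_sub_one {b m v : ℕ} (hv : v < b ^ m - 1) : 0 < b ∧ 0 < m := by
  refine ⟨Nat.pos_of_ne_zero ?_, Nat.pos_of_ne_zero ?_⟩ <;> rintro rfl
  · rcases m with _ | m <;> simp at hv
  · simp at hv

theorem coprime_pow_sub_one_pow {b m : ℕ} (hb : 0 < b) (hm : 0 < m) (j : ℕ) :
    Nat.Coprime (b ^ m - 1) (b ^ j) := by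
  have h : Nat.Coprime (b ^ m - 1) (b ^ m) :=
    (Nat.coprime_self_sub_left (Nat.one_le_pow _ _ hb)).mpr (Nat.coprime_one_left _)
  exact (h.coprime_dvd_right (dvd_pow_self b hm.ne')).pow_right j

theorem pow_modEq_pow_mod {b : ℕ} (hb : 0 < b) (m j : ℕ) :
    b ^ j ≡ b ^ (j % m) [MOD b ^ m - 1] := by
  have h : b ^ m ≡ 1 [MOD b ^ m - 1] := Nat.modEq_sub (Nat.one_le_pow _ _ hb)
  calc b ^ j = (b ^ m) ^ (j / m) * b ^ (j % m) := by rw [← pow_mul, ← pow_add, Nat.div_add_mod]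
    _ ≡ 1 ^ (j / m) * b ^ (j % m) [MOD b ^ m - 1] := (h.pow _).mul_right _
    _ = b ^ (j % m) := by rw [one_pow, one_mul]

theorem mul_pow_mod_pow_sub_one {b m v j : ℕ} (hv : v < b ^ m - 1) (hj : j ≤ m) :
    v * b ^ j % (b ^ m - 1) = v % b ^ (m - j) * b ^ j + v / b ^ (m - j) := by
  obtain ⟨hb, hm⟩ := pos_of_lt_pow_sub_one hv
  have hsplit : b ^ (m - j) * b ^ j = b ^ m := by rw [← pow_add, Nat.sub_add_cancel hj]
  set x := v / b ^ (m - j)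
  set y := v % b ^ (m - j)
  have hx : x < b ^ j := Nat.div_lt_of_lt_mul (by rw [hsplit]; omega)
  have hy : y * b ^ j + b ^ j ≤ b ^ m := by
    rw [← hsplit, ← Nat.succ_mul]
    exact Nat.mul_le_mul_right _ (Nat.mod_lt _ (by positivity))
  have hv' : v * b ^ j = x * (b ^ m - 1) + (y * b ^ j + x) := by
    have hxy : v = x * b ^ (m - j) + y := (Nat.div_add_mod' v _).symm
    zify [Nat.one_le_pow m b hb] at hxy hsplit ⊢
    linear_combination (b : ℤ) ^ j * hxy + (x : ℤ) * hsplit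
  have hne : y * b ^ j + x ≠ b ^ m - 1 := by
    intro h
    have hdvd : b ^ m - 1 ∣ v := (coprime_pow_sub_one_pow hb hm j).dvd_of_dvd_mul_right
      ⟨x + 1, by rw [hv', h]; ring⟩
    have : v = 0 := Nat.eq_zero_of_dvd_of_lt hdvd hv
    simp only [x, y, this, Nat.zero_div, Nat.zero_mod, zero_mul, add_zero] at h
    omega
  rw [hv', Nat.mul_add_mod_self_right, Nat.mod_eq_of_lt (by omega)]

theorem isMaxRotation_iff {b m v : ℕ} (hv : v < b ^ m - 1) :
    IsMaxRotation b m v ↔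
      ∀ d < m, v % b ^ (d + 1) * b ^ (m - 1 - d) + v / b ^ (d + 1) ≤ v := by
  obtain ⟨hb, hm⟩ := pos_of_lt_pow_sub_one hv
  have hrot : ∀ d < m, v * b ^ (m - 1 - d) % (b ^ m - 1) =
      v % b ^ (d + 1) * b ^ (m - 1 - d) + v / b ^ (d + 1) := by
    intro d hd
    rw [mul_pow_mod_pow_sub_one hv (by omega), show m - (m - 1 - d) = d + 1 by omega]
  refine ⟨fun h d hd => hrot d hd ▸ h _, fun h j => ?_⟩
  rw [(pow_modEq_pow_mod hb m j).mul_left v,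
    show j % m = m - 1 - (m - 1 - j % m) by have := Nat.mod_lt j hm; omega, hrot _ (by omega)]
  exact h _ (by omega)

theorem mod_mul_add_div_of_eq_mul_add {v c X Y : ℕ} (hv : v = c * X + Y) (hY : Y < c)
    (k : ℕ) : v % c * k + v / c = Y * k + X := by
  rw [hv, Nat.mul_add_mod, Nat.mod_eq_of_lt hY, Nat.mul_add_div (by omega), Nat.div_eq_of_lt hY,
    add_zero]

theorem isMaxRotation_pow_pred_add_pow {b m P : ℕ} (hb : 1 < b) (hPm : P + 2 ≤ m)
    (hmP : m ≤ 2 * P + 2) : IsMaxRotation b m (b ^ (m - 1) + b ^ P) := by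
  have hb0 : 0 < b := by omega
  have hpow : ∀ {e f}, e ≤ f → b ^ e ≤ b ^ f := fun h => Nat.pow_le_pow_right hb0 h
  have hsucc : ∀ e, 2 * b ^ e ≤ b ^ (e + 1) := fun e => by
    rw [pow_succ, mul_comm]; exact Nat.mul_le_mul_left _ hb
  have h1 := hsucc (m - 2)
  have h2 := hsucc (m - 1)
  rw [show m - 2 + 1 = m - 1 by omega] at h1
  rw [show m - 1 + 1 = m by omega] at h2
  have hP := hpow (show P ≤ m - 2 by omega)
  rcases (show b ^ (m - 1) + b ^ P ≤ b ^ m - 1 by omega).eq_or_lt with hvN | hvN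
  · -- only for `b = m = 2`, where every rotation of `v = b ^ m - 1` is `0`
    intro j; simp [hvN]
  rw [isMaxRotation_iff hvN]
  intro d hd
  rcases lt_or_ge d P with hdP | hPd
  · rw [mod_mul_add_div_of_eq_mul_add (X := b ^ (m - 2 - d) + b ^ (P - 1 - d)) (Y := 0) ?_
      (by positivity)]
    · have := hpow (show m - 2 - d ≤ m - 2 by omega)
      have := hpow (show P - 1 - d ≤ m - 2 by omega)
      omega
    · rw [mul_add, ← pow_add, ← pow_add, show d + 1 + (m - 2 - d) = m - 1 by omega,
        show d + 1 + (P - 1 - d) = P by omega, add_zero]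
  rcases (show d = m - 1 ∨ d + 2 ≤ m by omega) with rfl | hdm
  · rw [show m - 1 + 1 = m by omega, Nat.mod_eq_of_lt (by omega), Nat.div_eq_of_lt (by omega)]
    simp
  rw [mod_mul_add_div_of_eq_mul_add (X := b ^ (m - 2 - d)) (Y := b ^ P) ?_ ?_, ← pow_add]
  · rcases hPd.eq_or_lt with rfl | hPd
    · rw [show P + (m - 1 - P) = m - 1 by omega]
      have := hpow (show m - 2 - P ≤ P by omega)
      omega
    · have := hpow (show P + (m - 1 - d) ≤ m - 2 by omega)
      have := hpow (show m - 2 - d ≤ m - 2 by omega)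
      omega
  · rw [← pow_add, show d + 1 + (m - 2 - d) = m - 1 by omega, add_comm]
  · exact Nat.pow_lt_pow_right hb (by omega)

namespace IsMaxRotation

variable {b m v : ℕ}

theorem pow_pred_le (hv : IsMaxRotation b m v) (hb : 1 < b) (hv0 : 0 < v)
    (hvN : v < b ^ m - 1) : b ^ (m - 1) ≤ v := by
  set d := Nat.log b v
  have hd : b ^ d ≤ v := Nat.pow_log_le_self b hv0.ne'
  have hd' : v < b ^ (d + 1) := Nat.lt_pow_succ_log_self hb v
  have hdm : d < m := (Nat.pow_lt_pow_iff_right hb).mp (by omega)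
  have h : v * b ^ (m - 1 - d) ≤ v * 1 := by
    simpa [Nat.mod_eq_of_lt hd'] using (Nat.le_add_right _ _).trans
      ((isMaxRotation_iff hvN).mp hv d hdm)
  have hmd : m - 1 - d = 0 := by
    by_contra hne
    have := (Nat.pow_le_one_iff hne).mp (Nat.le_of_mul_le_mul_left h hv0)
    omega
  rwa [show m - 1 = d by omega]

theorem mod_pow_succ_lt (hv : IsMaxRotation b m v) (hvN : v < b ^ m - 1)
    (hv2 : v < 2 * b ^ (m - 1)) {d : ℕ} (hd : d < m) : v % b ^ (d + 1) < 2 * b ^ d := by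
  have h := (Nat.le_add_right _ _).trans ((isMaxRotation_iff hvN).mp hv d hd)
  by_contra! hle
  have : 2 * b ^ (m - 1) ≤ v % b ^ (d + 1) * b ^ (m - 1 - d) := by
    calc 2 * b ^ (m - 1) = 2 * b ^ d * b ^ (m - 1 - d) := by
          rw [mul_assoc, ← pow_add, Nat.add_sub_cancel' (by omega)]
      _ ≤ _ := Nat.mul_le_mul_right _ hle
  omega

theorem pow_add_pow_le_of_gap (hv : IsMaxRotation b m v) (hvN : v < b ^ m - 1)
    {d e : ℕ} (hd : d < m) (h : b ^ d + b ^ e ≤ v % b ^ (d + 1)) :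
    b ^ (m - 1) + b ^ (e + (m - 1 - d)) ≤ v := by
  have h' := (Nat.le_add_right _ _).trans ((isMaxRotation_iff hvN).mp hv d hd)
  have : b ^ (m - 1) + b ^ (e + (m - 1 - d)) ≤ v % b ^ (d + 1) * b ^ (m - 1 - d) := by
    calc b ^ (m - 1) + b ^ (e + (m - 1 - d)) = (b ^ d + b ^ e) * b ^ (m - 1 - d) := by
          rw [add_mul, ← pow_add, ← pow_add, Nat.add_sub_cancel' (by omega)]
      _ ≤ _ := Nat.mul_le_mul_right _ h
  omega

theorem pow_add_pow_le_of_wrap (hv : IsMaxRotation b m v) (hvN : v < b ^ m - 1)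
    (htop : b ^ (m - 1) ≤ v) {d : ℕ} (hd : d + 1 < m) (h : b ^ d ≤ v % b ^ (d + 1)) :
    b ^ (m - 1) + b ^ (m - 2 - d) ≤ v := by
  obtain ⟨hb, -⟩ := pos_of_lt_pow_sub_one hvN
  have h' := (isMaxRotation_iff hvN).mp hv d (by omega)
  have hrot : b ^ (m - 1) ≤ v % b ^ (d + 1) * b ^ (m - 1 - d) := by
    calc b ^ (m - 1) = b ^ d * b ^ (m - 1 - d) := by
          rw [← pow_add, Nat.add_sub_cancel' (by omega)]
      _ ≤ _ := Nat.mul_le_mul_right _ h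
  have hwrap : b ^ (m - 2 - d) ≤ v / b ^ (d + 1) := by
    calc b ^ (m - 2 - d) = b ^ (m - 1) / b ^ (d + 1) := by
          rw [Nat.pow_div (by omega) hb]; congr 1; omega
      _ ≤ _ := Nat.div_le_div_right htop
  omega

theorem exists_leading_digit (hv : IsMaxRotation b m v) (hb : 1 < b) (hvN : v < b ^ m - 1)
    (hv2 : v < 2 * b ^ (m - 1)) {k : ℕ} (hk : k ≤ m) (hw : v % b ^ k ≠ 0) :
    ∃ q < k, v % b ^ (q + 1) = v % b ^ k ∧ v % b ^ (q + 1) = b ^ q + v % b ^ q := by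
  set w := v % b ^ k
  set q := Nat.log b w
  have hq : b ^ q ≤ w := Nat.pow_log_le_self b hw
  have hq' : w < b ^ (q + 1) := Nat.lt_pow_succ_log_self hb w
  have hqk : q < k :=
    (Nat.pow_lt_pow_iff_right hb).mp (hq.trans_lt (Nat.mod_lt _ (by positivity)))
  have hmod : v % b ^ (q + 1) = w := by
    rw [← Nat.mod_mod_of_dvd v (pow_dvd_pow b hqk), Nat.mod_eq_of_lt hq']
  have hlt := hv.mod_pow_succ_lt hvN hv2 (d := q) (by omega)
  refine ⟨q, hqk, hmod, ?_⟩
  rw [← Nat.mod_mod_of_dvd v (pow_dvd_pow b q.le_succ), hmod, Nat.mod_eq_sub_mod hq,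
    Nat.mod_eq_of_lt (by omega)]
  omega

theorem eq_pow_pred_add_pow {P : ℕ} (hv : IsMaxRotation 3 m v)
    (heven : Even v) (hv0 : 0 < v) (hvP : v < 3 ^ (m - 1) + 3 ^ P) (hP : 4 * P + 1 ≤ 3 * m) :
    ∃ q < P, m ≤ 2 * q + 2 ∧ v = 3 ^ (m - 1) + 3 ^ q := by
  have hodd : ∀ e, 3 ^ e % 2 = 1 := fun e => by simp [Nat.pow_mod]
  have hv2 : v % 2 = 0 := Nat.even_iff.mp heven
  have hexp : ∀ e, 3 ^ (m - 1) + 3 ^ e ≤ v → e < P := fun e he =>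
    (Nat.pow_lt_pow_iff_right (by norm_num : 1 < 3)).mp (by omega)
  have hvlt : v < 2 * 3 ^ (m - 1) := by
    have := Nat.pow_le_pow_right (show 0 < 3 by norm_num) (show P ≤ m - 1 by omega)
    omega
  have hvN : v < 3 ^ m - 1 := by
    have : 3 ^ m = 3 * 3 ^ (m - 1) := by rw [← pow_succ']; congr 1; omega
    omega
  have htop := hv.pow_pred_le (by norm_num) hv0 hvN
  have htail : v % 3 ^ (m - 1) = v - 3 ^ (m - 1) := by
    rw [Nat.mod_eq_sub_mod htop, Nat.mod_eq_of_lt (by omega)]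
  obtain ⟨q₁, hq₁, h₁, h₁'⟩ :=
    hv.exists_leading_digit (by norm_num) hvN hvlt (k := m - 1) (by omega)
      (by have := hodd (m - 1); omega)
  have hq₁P : q₁ < P := hexp q₁ (by omega)
  by_cases hr₁ : v % 3 ^ q₁ = 0
  · refine ⟨q₁, hq₁P, ?_, by omega⟩
    have := hv.pow_add_pow_le_of_wrap hvN htop (d := q₁) (by omega) (by omega)
    have : m - 2 - q₁ ≤ q₁ := (Nat.pow_le_pow_iff_right (by norm_num : 1 < 3)).mp (by omega)
    omega
  obtain ⟨q₂, hq₂, h₂, h₂'⟩ :=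
    hv.exists_leading_digit (by norm_num) hvN hvlt (k := q₁) (by omega) hr₁
  have hr₂ : v % 3 ^ q₂ ≠ 0 := by
    -- otherwise `v = 3 ^ (m - 1) + 3 ^ q₁ + 3 ^ q₂` would be odd
    have := hodd (m - 1); have := hodd q₁; have := hodd q₂
    omega
  obtain ⟨q₃, hq₃, h₃, h₃'⟩ :=
    hv.exists_leading_digit (by norm_num) hvN hvlt (k := q₂) (by omega) hr₂
  have g₁ := hexp _ (hv.pow_add_pow_le_of_gap hvN (d := q₁) (e := q₂) (by omega) (by omega))
  have g₂ := hexp _ (hv.pow_add_pow_le_of_gap hvN (d := q₂) (e := q₃) (by omega) (by omega))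
  have g₃ := hexp _ (hv.pow_add_pow_le_of_wrap hvN htop (d := q₃) (by omega) (by omega))
  omega

end IsMaxRotation

theorem sub_mul_mod_of_not_dvd {N v c : ℕ} (hvN : v ≤ N) (h : ¬ N ∣ v * c) :
    (N - v) * c % N = N - v * c % N := by
  have hN : 0 < N := Nat.pos_of_ne_zero (by rintro rfl; simp [Nat.le_zero.mp hvN] at h)
  have hle : v * c % N ≤ N := (Nat.mod_lt _ hN).le
  zify [hvN, hle]
  have h' : ¬ (N : ℤ) ∣ (v * c : ℤ) := by exact_mod_cast h
  rw [sub_mul, ← neg_add_eq_sub, Int.add_mul_emod_self_left, Int.neg_emod, if_neg h']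
  simp

theorem isCosetLeader_iff_isMaxRotation {q m n s : ℕ} (hq : 1 < q)
    (hn : (q - 1) * n = q ^ m - 1) (hs : 0 < s) (hsn : s < n) :
    IsCosetLeader q n s ↔ IsMaxRotation q m (q ^ m - 1 - (q - 1) * s) := by
  have hq1 : 0 < q - 1 := by omega
  have hm : 0 < m := by
    refine Nat.pos_of_ne_zero fun hm => ?_
    have : n ≤ (q - 1) * n := Nat.le_mul_of_pos_left n hq1
    rw [hn, hm, pow_zero] at this
    omega
  have key : ∀ j, s ≤ s * q ^ j % n ↔
      (q ^ m - 1 - (q - 1) * s) * q ^ j % (q ^ m - 1) ≤ q ^ m - 1 - (q - 1) * s := by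
    intro j
    have hmul : (q - 1) * s * q ^ j % (q ^ m - 1) = (q - 1) * (s * q ^ j % n) := by
      rw [← hn, mul_assoc, Nat.mul_mod_mul_left]
    have hndvd : ¬ q ^ m - 1 ∣ (q - 1) * s * q ^ j := by
      intro h
      have := (coprime_pow_sub_one_pow (by omega) hm j).dvd_of_dvd_mul_right h
      rw [← hn] at this
      exact absurd (Nat.le_of_dvd hs (Nat.dvd_of_mul_dvd_mul_left hq1 this)) (by omega)
    have hsN : (q - 1) * s ≤ q ^ m - 1 := hn ▸ Nat.mul_le_mul_left _ hsn.le
    have hrN : (q - 1) * (s * q ^ j % n) ≤ q ^ m - 1 :=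
      hn ▸ Nat.mul_le_mul_left _ (Nat.mod_lt _ (by omega)).le
    rw [sub_mul_mod_of_not_dvd hsN hndvd, hmul, ← Nat.mul_le_mul_left_iff hq1]
    omega
  exact ⟨fun h j => (key j).mp (h.2 j), fun h => ⟨hsn, fun j => (key j).mpr (h j)⟩⟩

/-- The paper's `δ_i` is `leaderDelta m ((m - 3) / 2 + i)`. -/
def leaderDelta (m e : ℕ) : ℕ := 3 ^ (m - 1) - 1 - (3 ^ e - 1) / 2

theorem two_mul_leaderDelta_add {m e : ℕ} (he : e < m) :
    2 * leaderDelta m e + (3 ^ (m - 1) + 3 ^ e) = 3 ^ m - 1 := by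
  have h3 : 3 ^ m = 3 * 3 ^ (m - 1) := by rw [← pow_succ']; congr 1; omega
  have hle : 3 ^ e ≤ 3 ^ (m - 1) := Nat.pow_le_pow_right (by norm_num) (by omega)
  have hodd : 3 ^ e % 2 = 1 := by simp [Nat.pow_mod]
  unfold leaderDelta
  generalize 3 ^ e = x at *
  generalize 3 ^ (m - 1) = y at *
  omega

theorem leaderDelta_strictAntiOn (m : ℕ) : StrictAntiOn (leaderDelta m) (Set.Iio m) := by
  intro e he e' he' hlt
  have := two_mul_leaderDelta_add he
  have := two_mul_leaderDelta_add he'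
  have := Nat.pow_lt_pow_right (by norm_num : 1 < 3) hlt
  omega

theorem isCosetLeader_leaderDelta {m n e : ℕ} (hn : 2 * n = 3 ^ m - 1) (he : e + 2 ≤ m)
    (hme : m ≤ 2 * e + 2) : IsCosetLeader 3 n (leaderDelta m e) := by
  have hδ := two_mul_leaderDelta_add (show e < m by omega)
  have h3 : 3 ^ m = 3 * 3 ^ (m - 1) := by rw [← pow_succ']; congr 1; omega
  have hlt : 3 ^ e < 3 ^ (m - 1) := Nat.pow_lt_pow_right (by norm_num) (by omega)
  have : 0 < 3 ^ e := by positivity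
  rw [isCosetLeader_iff_isMaxRotation (by norm_num) hn (by omega) (by omega),
    show 3 ^ m - 1 - 2 * leaderDelta m e = 3 ^ (m - 1) + 3 ^ e by omega]
  exact isMaxRotation_pow_pred_add_pow (by norm_num) he hme

theorem setOf_isCosetLeader_lt_leaderDelta {m n P : ℕ} (hn : 2 * n = 3 ^ m - 1)
    (hP : 4 * P + 1 ≤ 3 * m) :
    {s | IsCosetLeader 3 n s ∧ leaderDelta m P < s} =
      leaderDelta m '' Set.Ico ((m - 1) / 2) P := by
  have hPm : P < m := by omega
  have hδP := two_mul_leaderDelta_add hPm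
  have : 0 < 3 ^ P := by positivity
  ext s
  constructor
  · rintro ⟨hs, hlt⟩
    have hsn : s < n := hs.1
    have hv := (isCosetLeader_iff_isMaxRotation (by norm_num) hn (by omega) hsn).mp hs
    rw [show 3 - 1 = 2 from rfl] at hv
    obtain ⟨q, hqP, hmq, hq⟩ :=
      hv.eq_pow_pred_add_pow ⟨n - s, by omega⟩ (by omega) (by omega) hP
    have := two_mul_leaderDelta_add (show q < m by omega)
    have : 0 < 3 ^ q := by positivity
    exact ⟨q, ⟨by omega, hqP⟩, by omega⟩
  · rintro ⟨e, ⟨he, heP⟩, rfl⟩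
    exact ⟨isCosetLeader_leaderDelta hn (by omega) (by omega),
      leaderDelta_strictAntiOn m (show e < m by omega) hPm heP⟩

/-- `δi` is the `i`-th largest coset leader: it is a coset leader and exactly
`i - 1` coset leaders exceed it. -/
theorem stmt4 (m n : ℕ) (hm : 4 ≤ m) (hn : n = (3 ^ m - 1) / 2)
    (i : ℕ) (hi1 : 1 ≤ i) (hi2 : i ≤ (m + 3) / 4)
    (δi : ℕ) (hδi : δi = 3 ^ (m - 1) - 1 - (3 ^ ((m - 3) / 2 + i) - 1) / 2) :
    IsCosetLeader 3 n δi ∧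
      Set.ncard {s : ℕ | IsCosetLeader 3 n s ∧ δi < s} = i - 1 := by
  have hn' : 2 * n = 3 ^ m - 1 := by
    have : 3 ^ m % 2 = 1 := by simp [Nat.pow_mod]
    omega
  have hδ : δi = leaderDelta m ((m - 3) / 2 + i) := hδi
  have hinj : Set.InjOn (leaderDelta m) (Set.Ico ((m - 1) / 2) ((m - 3) / 2 + i)) :=
    (leaderDelta_strictAntiOn m).injOn.mono fun e he => show e < m by have := he.2; omega
  refine ⟨hδ ▸ isCosetLeader_leaderDelta hn' (by omega) (by omega), ?_⟩
  rw [hδ, setOf_isCosetLeader_lt_leaderDelta hn' (by omega), hinj.ncard_image,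
    ← Finset.coe_Ico, Set.ncard_coe_finset, Nat.card_Ico]
  omega
end

section
/- Let q be a prime power, m ≥ 2, and n = (q^m − 1)/(q − 1). The narrow-sense BCH code C_{(n,q,m,2)} = {c ∈ GF(q)^n : Σ_{j=0}^{n−1} c_j β^j = 0} has dimension n − m over GF(q), and its minimum distance d equals 3 if gcd(m, q−1) = 1 and equals 2 if gcd(m, q−1) > 1. -/
/-- The linear map `c ↦ Σ_j c_j • β^(i·j)` from `GF(q)^n` to `GF(q^m)`. -/
noncomputable def bchCheck (F E : Type*) [Field F] [Field E] [Algebra F E]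
    (n : ℕ) (β : E) (i : ℕ) : (Fin n → F) →ₗ[F] E :=
  ∑ j : Fin n, (LinearMap.proj j : (Fin n → F) →ₗ[F] F).smulRight (β ^ (i * (j : ℕ)))

/-- The narrow-sense BCH code of length `n` and designed distance `δ`:
all `c` with `Σ_j c_j β^(i·j) = 0` for `1 ≤ i ≤ δ - 1`. -/
noncomputable def bchCode (F E : Type*) [Field F] [Field E] [Algebra F E]
    (n : ℕ) (β : E) (δ : ℕ) : Submodule F (Fin n → F) :=
  ⨅ i ∈ Finset.Icc 1 (δ - 1), LinearMap.ker (bchCheck F E n β i)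

/-!
The code is the kernel of the `GF(q)`-linear map `c ↦ Σ c_j β^j` to `GF(q^m)`. This map is onto,
since its image contains the `n > q^(m-1)` distinct powers of `β`, which gives the dimension.
A word of weight two is a relation `a β^j = b β^k` with `j ≠ k`; raising it to the power `q - 1`
kills the scalars, so such a relation exists iff `gcd(n, q - 1) > 1`, and
`gcd(n, q - 1) = gcd(m, q - 1)` because `n = Σ_{i<m} q^i ≡ m mod (q - 1)`. When the gcd is `1`,
`(a, k) ↦ a β^k` is an injection `GF(q)^* × ℤ/n → GF(q^m)^*` between sets of the same size, so
`1 + β = a β^k`, a word of weight three.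
-/

open Function

namespace Nat
variable {q m : ℕ}

theorem pow_pred_lt_geomSum (hm : 2 ≤ m) : q ^ (m - 1) < ∑ i ∈ Finset.range m, q ^ i := by
  obtain ⟨k, rfl⟩ : ∃ k, m = k + 2 := ⟨m - 2, by omega⟩
  rw [Finset.sum_range_succ, Finset.sum_range_succ']
  simp

theorem gcd_geomSum_sub_one (hq : 1 ≤ q) :
    (∑ i ∈ Finset.range m, q ^ i).gcd (q - 1) = m.gcd (q - 1) := by
  refine Nat.ModEq.gcd_eq ?_
  have : (q : ZMod (q - 1)) = 1 := by
    rw [← Nat.sub_add_cancel hq]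
    simp
  rw [← ZMod.natCast_eq_natCast_iff]
  simp [this]

end Nat

namespace FiniteField
variable {F E : Type*} [Field F] [Fintype F] [Field E] [Algebra F E]

theorem smul_pow_card_sub_one {a : F} (ha : a ≠ 0) (x : E) :
    (a • x) ^ (Fintype.card F - 1) = x ^ (Fintype.card F - 1) := by
  rw [smul_pow, pow_card_sub_one_eq_one a ha, one_smul]

theorem exists_algebraMap_eq_of_pow_card_sub_one_eq_one {x : E}
    (hx : x ^ (Fintype.card F - 1) = 1) : ∃ a : F, algebraMap F E a = x := by
  classical
  obtain ⟨g, hg⟩ := IsCyclic.exists_ofOrder_eq_natCard (α := Fˣ)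
  rw [Nat.card_eq_fintype_card, Fintype.card_units, ← orderOf_units] at hg
  have hprim : IsPrimitiveRoot (algebraMap F E g) (Fintype.card F - 1) :=
    (hg ▸ IsPrimitiveRoot.orderOf (g : F)).map_of_injective (algebraMap F E).injective
  have : NeZero (Fintype.card F - 1) := ⟨by have := Fintype.one_lt_card (α := F); omega⟩
  obtain ⟨i, -, hi⟩ := hprim.eq_pow_of_pow_eq_one hx
  exact ⟨(g : F) ^ i, by rw [map_pow, hi]⟩

end FiniteField

namespace IsPrimitiveRoot
variable {F E : Type*} [Field F] [Fintype F] [Field E] [Algebra F E] {n : ℕ} {β : E}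
  (hβ : IsPrimitiveRoot β n)
include hβ

theorem smul_pow_ne_smul_pow (hcop : n.Coprime (Fintype.card F - 1)) {j k : ℕ} (hj : j < n)
    (hk : k < n) (hjk : j ≠ k) {a : F} (ha : a ≠ 0) (b : F) : a • β ^ j ≠ b • β ^ k := by
  intro h
  have hb : b ≠ 0 := by
    rintro rfl
    rw [zero_smul] at h
    exact smul_ne_zero ha (pow_ne_zero j (hβ.ne_zero (by omega))) h
  refine hjk ((hβ.pow_of_coprime _ hcop.symm).pow_inj hj hk ?_)
  rw [pow_right_comm, ← FiniteField.smul_pow_card_sub_one ha, h,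
    FiniteField.smul_pow_card_sub_one hb, pow_right_comm]

theorem exists_smul_pow_eq [Fintype E] (hcop : n.Coprime (Fintype.card F - 1))
    (hcard : (Fintype.card F - 1) * n = Fintype.card E - 1) {x : E} (hx : x ≠ 0) :
    ∃ a : F, ∃ k < n, a • β ^ k = x := by
  classical
  have hn : n ≠ 0 := by
    rintro rfl
    have := Fintype.one_lt_card (α := E)
    omega
  have hβk (k : ℕ) : β ^ k ≠ 0 := pow_ne_zero k (hβ.ne_zero hn)
  let f : Fˣ × Fin n → Eˣ := fun p => Units.mk0 ((p.1 : F) • β ^ (p.2 : ℕ))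
    (smul_ne_zero p.1.ne_zero (hβk _))
  have hf : Injective f := by
    rintro ⟨a, j⟩ ⟨b, k⟩ h
    have h' : (a : F) • β ^ (j : ℕ) = (b : F) • β ^ (k : ℕ) := congrArg Units.val h
    obtain rfl : j = k := by
      by_contra hjk
      exact hβ.smul_pow_ne_smul_pow hcop j.2 k.2 (Fin.val_injective.ne hjk) a.ne_zero b h'
    rw [Units.ext (smul_left_injective F (hβk j) h')]
  have hcard' : Fintype.card (Fˣ × Fin n) = Fintype.card Eˣ := by
    simp [Fintype.card_units, hcard]
  obtain ⟨⟨a, k⟩, hk⟩ := ((Fintype.bijective_iff_injective_and_card f).mpr ⟨hf, hcard'⟩).2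
    (Units.mk0 x hx)
  exact ⟨a, k, k.2, congrArg Units.val hk⟩

end IsPrimitiveRoot

theorem Submodule.eq_top_of_card_pow_finrank_sub_one_lt_natCard {F E : Type*} [Field F]
    [Fintype F] [AddCommGroup E] [Module F E] [FiniteDimensional F E] (V : Submodule F E)
    (hV : Fintype.card F ^ (Module.finrank F E - 1) < Nat.card V) : V = ⊤ := by
  rw [Module.natCard_eq_pow_finrank (K := F), Nat.card_eq_fintype_card,
    Nat.pow_lt_pow_iff_right Fintype.one_lt_card] at hV
  exact Submodule.eq_top_of_finrank_eq (le_antisymm (Submodule.finrank_le V) (by omega))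

section BCH
variable {F E : Type*} [Field F] [Field E] [Algebra F E] {n : ℕ} {β : E}

theorem bchCode_two_eq_ker : bchCode F E n β 2 = LinearMap.ker (bchCheck F E n β 1) := by
  simp [bchCode]

theorem bchCheck_one_apply (c : Fin n → F) :
    bchCheck F E n β 1 c = ∑ j, c j • β ^ (j : ℕ) := by
  simp [bchCheck]

variable [DecidableEq F]

theorem bchCheck_one_eq_sum_support (c : Fin n → F) :
    bchCheck F E n β 1 c = ∑ j with c j ≠ 0, c j • β ^ (j : ℕ) := by
  rw [bchCheck_one_apply, Finset.sum_filter_of_ne]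
  rintro j - h hc
  exact h (by rw [hc, zero_smul])

theorem exists_mem_bchCode_two_hammingNorm_eq {r : ℕ} [NeZero r] {pos : Fin r → Fin n}
    (hpos : Injective pos) {a : Fin r → F} (ha : ∀ l, a l ≠ 0)
    (hsum : ∑ l, a l • β ^ (pos l : ℕ) = 0) :
    ∃ c ∈ bchCode F E n β 2, c ≠ 0 ∧ hammingNorm c = r := by
  set c : Fin n → F := extend pos a 0
  have hsupp : ({j | c j ≠ 0} : Finset (Fin n)) = Finset.univ.image pos := by
    ext j
    by_cases hj : ∃ l, pos l = j
    · obtain ⟨l, rfl⟩ := hj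
      simp [c, hpos.extend_apply, ha]
    · simp_all [c]
  have hnorm : hammingNorm c = r := by
    rw [hammingNorm, hsupp, Finset.card_image_of_injective _ hpos, Finset.card_univ,
      Fintype.card_fin]
  refine ⟨c, ?_, fun h => NeZero.ne r (hnorm ▸ hammingNorm_eq_zero.mpr h), hnorm⟩
  rw [bchCode_two_eq_ker, LinearMap.mem_ker, bchCheck_one_eq_sum_support, hsupp,
    Finset.sum_image hpos.injOn]
  simpa [c, hpos.extend_apply] using hsum

end BCH

theorem finrank_bchCode_two {F E : Type*} [Field F] [Fintype F] [Field E] [Algebra F E]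
    [FiniteDimensional F E] {n : ℕ} {β : E} (hβ : IsPrimitiveRoot β n)
    (hn : Fintype.card F ^ (Module.finrank F E - 1) < n) :
    Module.finrank F (bchCode F E n β 2) = n - Module.finrank F E := by
  have : Finite E := Module.finite_of_finite F
  have hrange : LinearMap.range (bchCheck F E n β 1) = ⊤ := by
    refine Submodule.eq_top_of_card_pow_finrank_sub_one_lt_natCard _ (hn.trans_le ?_)
    have hpow (j : Fin n) : β ^ (j : ℕ) ∈ LinearMap.range (bchCheck F E n β 1) :=
      ⟨Pi.single j 1, by simp [bchCheck_one_apply, Pi.single_apply]⟩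
    exact (Nat.card_fin n).symm.trans_le (Nat.card_le_card_of_injective (fun j => ⟨_, hpow j⟩)
      fun i j h => Fin.ext (hβ.pow_inj i.2 j.2 (congrArg Subtype.val h)))
  have := LinearMap.finrank_range_add_finrank_ker (bchCheck F E n β 1)
  rw [hrange, finrank_top, Module.finrank_fin_fun] at this
  rw [bchCode_two_eq_ker]
  omega

section MinimumDistance
variable {F E : Type*} [Field F] [DecidableEq F] [Field E] [Algebra F E] {n : ℕ} {β : E}
  {c : Fin n → F}

theorem two_le_hammingNorm_of_mem_bchCode_two (hβ : β ≠ 0) (hc : c ∈ bchCode F E n β 2)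
    (hc0 : c ≠ 0) : 2 ≤ hammingNorm c := by
  rw [bchCode_two_eq_ker, LinearMap.mem_ker, bchCheck_one_eq_sum_support] at hc
  by_contra! h
  have h1 : hammingNorm c = 1 := by
    have := hammingNorm_pos_iff.mpr hc0
    omega
  obtain ⟨j, hj⟩ := Finset.card_eq_one.mp h1
  have hcj : c j ≠ 0 := by
    simpa using hj.superset (Finset.mem_singleton_self j)
  rw [hj, Finset.sum_singleton] at hc
  exact smul_ne_zero hcj (pow_ne_zero _ hβ) hc

variable [Fintype F]

theorem three_le_hammingNorm_of_mem_bchCode_two (hβ : IsPrimitiveRoot β n)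
    (hcop : n.Coprime (Fintype.card F - 1)) (hc : c ∈ bchCode F E n β 2) (hc0 : c ≠ 0) :
    3 ≤ hammingNorm c := by
  have hn : n ≠ 0 := by
    rintro rfl
    exact hc0 (Subsingleton.elim _ _)
  have h2 := two_le_hammingNorm_of_mem_bchCode_two (hβ.ne_zero hn) hc hc0
  rw [bchCode_two_eq_ker, LinearMap.mem_ker, bchCheck_one_eq_sum_support] at hc
  by_contra! h
  obtain ⟨j, k, hjk, hsupp⟩ := Finset.card_eq_two.mp (by omega : hammingNorm c = 2)
  have hcj : c j ≠ 0 := by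
    simpa using hsupp.superset (Finset.mem_insert_self j _)
  rw [hsupp, Finset.sum_pair hjk, add_eq_zero_iff_eq_neg, ← neg_smul] at hc
  exact hβ.smul_pow_ne_smul_pow hcop j.2 k.2 (Fin.val_injective.ne hjk) hcj _ hc

theorem exists_mem_bchCode_two_hammingNorm_eq_two (hβ : IsPrimitiveRoot β n) (hn : n ≠ 0)
    (hg : n.gcd (Fintype.card F - 1) ≠ 1) :
    ∃ c ∈ bchCode F E n β 2, c ≠ 0 ∧ hammingNorm c = 2 := by
  set g := n.gcd (Fintype.card F - 1)
  have hg1 : 1 < g := by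
    have : g ≠ 0 := Nat.gcd_ne_zero_left hn
    omega
  set t := n / g
  have ht0 : 0 < t := Nat.div_pos (Nat.le_of_dvd (by omega) (Nat.gcd_dvd_left _ _)) (by omega)
  have htn : t < n := Nat.div_lt_self (by omega) hg1
  have hβt : (β ^ t) ^ (Fintype.card F - 1) = 1 := by
    rw [← pow_mul, hβ.pow_eq_one_iff_dvd, Nat.div_mul_right_comm (Nat.gcd_dvd_left _ _),
      Nat.mul_div_assoc _ (Nat.gcd_dvd_right _ _)]
    exact Nat.dvd_mul_right _ _
  obtain ⟨a, ha⟩ := FiniteField.exists_algebraMap_eq_of_pow_card_sub_one_eq_one hβt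
  have ha0 : a ≠ 0 := by
    rintro rfl
    exact pow_ne_zero t (hβ.ne_zero hn) (by rw [← ha, map_zero])
  refine exists_mem_bchCode_two_hammingNorm_eq (pos := ![⟨0, by omega⟩, ⟨t, htn⟩])
    (a := ![a, -1]) ?_ ?_ ?_
  · simp [Fin.ext_iff, ht0.ne]
  · simp [Fin.forall_fin_two, ha0]
  · simp [Fin.sum_univ_two, ← ha, Algebra.algebraMap_eq_smul_one]

theorem exists_mem_bchCode_two_hammingNorm_eq_three [Fintype E] (hβ : IsPrimitiveRoot β n)
    (hn : 2 ≤ n) (hcop : n.Coprime (Fintype.card F - 1))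
    (hcard : (Fintype.card F - 1) * n = Fintype.card E - 1) :
    ∃ c ∈ bchCode F E n β 2, c ≠ 0 ∧ hammingNorm c = 3 := by
  have h1β : 1 + β ≠ 0 := fun h =>
    hβ.smul_pow_ne_smul_pow hcop (j := 1) (k := 0) (by omega) (by omega) one_ne_zero
      one_ne_zero (-1) (by rw [one_smul, pow_one, pow_zero, neg_one_smul]; linear_combination h)
  obtain ⟨a, k, hk, hak⟩ := hβ.exists_smul_pow_eq hcop hcard h1β
  have ha0 : a ≠ 0 := by
    rintro rfl
    exact h1β (by rw [← hak, zero_smul])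
  have hk0 : k ≠ 0 := by
    rintro rfl
    refine hβ.smul_pow_ne_smul_pow hcop (j := 1) (k := 0) (by omega) (by omega) one_ne_zero
      one_ne_zero (a - 1) ?_
    rw [sub_smul, hak]
    simp
  have hk1 : k ≠ 1 := by
    rintro rfl
    refine hβ.smul_pow_ne_smul_pow hcop (j := 0) (k := 1) (by omega) (by omega) zero_ne_one
      one_ne_zero (a - 1) ?_
    rw [sub_smul, hak]
    simp
  refine exists_mem_bchCode_two_hammingNorm_eq
    (pos := ![⟨0, by omega⟩, ⟨1, by omega⟩, ⟨k, hk⟩]) (a := ![1, 1, -a]) ?_ ?_ ?_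
  · simp only [Matrix.vecCons, Fin.cons_injective_iff]
    simp [Fin.ext_iff, Injective, hk0.symm, hk1.symm]
  · simp [Fin.forall_fin_succ, ha0]
  · simp [Fin.sum_univ_three, hak]

end MinimumDistance

theorem stmt5 (q m n : ℕ) (hm : 2 ≤ m) (hn : n = (q ^ m - 1) / (q - 1))
    (F E : Type*) [Field F] [Fintype F] [DecidableEq F] [Field E] [Fintype E]
    [Algebra F E] (hF : Fintype.card F = q) (hE : Fintype.card E = q ^ m)
    (α : E) (hα : orderOf α = q ^ m - 1) (β : E) (hβ : β = α ^ (q - 1)) :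
    Module.finrank F ↥(bchCode F E n β 2) = n - m ∧
      IsLeast {w : ℕ | ∃ c ∈ bchCode F E n β 2, c ≠ 0 ∧ hammingNorm c = w}
        (if Nat.gcd m (q - 1) = 1 then 3 else 2) := by
  have hq : 2 ≤ q := hF ▸ Fintype.one_lt_card
  have hn_sum : n = ∑ i ∈ Finset.range m, q ^ i := hn.trans (Nat.geomSum_eq hq m).symm
  have hcard : q ^ m - 1 = (q - 1) * n :=
    hn ▸ (Nat.mul_div_cancel' (Nat.sub_one_dvd_pow_sub_one q m)).symm
  have hn_lt : q ^ (m - 1) < n := hn_sum ▸ Nat.pow_pred_lt_geomSum hm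
  have hn2 : 2 ≤ n := by
    have : 0 < q ^ (m - 1) := by positivity
    omega
  have hgcd : n.gcd (q - 1) = m.gcd (q - 1) := hn_sum ▸ Nat.gcd_geomSum_sub_one (by omega)
  have hβn : IsPrimitiveRoot β n :=
    hβ ▸ (hα ▸ IsPrimitiveRoot.orderOf α).pow (hcard ▸ Nat.mul_pos (by omega) (by omega)) hcard
  have hrank : Module.finrank F E = m := by
    have hE' := Module.card_eq_pow_finrank (K := F) (V := E)
    rw [hE, hF] at hE'
    exact Nat.pow_right_injective hq hE'.symm
  refine ⟨by rw [finrank_bchCode_two hβn (by rwa [hF, hrank]), hrank], ?_⟩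
  split_ifs with hcop <;> rw [← hgcd, ← hF] at hcop
  · refine ⟨exists_mem_bchCode_two_hammingNorm_eq_three hβn hn2 hcop
      (by rw [hF, hE, hcard]), ?_⟩
    rintro w ⟨c, hc, hc0, rfl⟩
    exact three_le_hammingNorm_of_mem_bchCode_two hβn hcop hc hc0
  · refine ⟨exists_mem_bchCode_two_hammingNorm_eq_two hβn (by omega) hcop, ?_⟩
    rintro w ⟨c, hc, hc0, rfl⟩
    exact two_le_hammingNorm_of_mem_bchCode_two (hβn.ne_zero (by omega)) hc hc0
end

section
/- Let q be a prime power with q ≥ 3, m ≥ 2, and n = (q^m − 1)/(q − 1). The even-like subcode 𝐶̃_{(n,q,m,2)} = {c ∈ GF(q)^n : Σ_{j=0}^{n−1} c_j = 0 and Σ_{j=0}^{n−1} c_j β^j = 0} has dimension n − m − 1 over GF(q), and its minimum distance d satisfies 3 ≤ d ≤ 4. -/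
/-- The linear map `c ↦ Σ_j c_j`. -/
noncomputable def sumCoords (F : Type*) [Field F] (n : ℕ) : (Fin n → F) →ₗ[F] F :=
  ∑ j : Fin n, (LinearMap.proj j : (Fin n → F) →ₗ[F] F)

/-- The even-like subcode of the narrow-sense BCH code. -/
noncomputable def bchCodeEven (F E : Type*) [Field F] [Field E] [Algebra F E]
    (n : ℕ) (β : E) (δ : ℕ) : Submodule F (Fin n → F) :=
  bchCode F E n β δ ⊓ LinearMap.ker (sumCoords F n)

/-!
The code is the kernel of the check map `c ↦ (Σ c_j β^j, Σ c_j) : F^n → E × F`. The powers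
`β^j` (`j < n`) are `n > q^(m-1)` distinct nonzero vectors, so they span `E`; since moreover
`Σ β^j = 0` and `n ≡ 1 (mod q)`, the all-ones word maps to `(0, 1)` and the check map is onto,
which gives the dimension `n - (m + 1)`.

A nonzero codeword of weight at most 2 would force `c_j = -c_i` and then `β^i = β^j`. For the
upper bound, the `n(n-1)/2 > n` differences `β^i - β^j` (`i < j`) fall into the `n` points of the
projective space of `E` over `F`, so two of them are proportional, `β^k - β^l = t (β^i - β^j)`;
then `e_k - e_l - t (e_i - e_j)` is a nonzero codeword of weight at most 4.
-/

open Function Module Finset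

section Counting

variable {F V : Type*} [Field F] [AddCommGroup V] [Module F V]

theorem Submodule.eq_top_of_pow_finrank_pred_lt_card [Finite F] [FiniteDimensional F V]
    (W : Submodule F V) (h : Nat.card F ^ (finrank F V - 1) < Nat.card W) : W = ⊤ := by
  rw [Module.natCard_eq_pow_finrank (K := F) (V := W),
    Nat.pow_lt_pow_iff_right Finite.one_lt_card] at h
  exact Submodule.eq_top_of_finrank_eq (le_antisymm (Submodule.finrank_le W) (by omega))

theorem card_lt_card_span_range [Finite V] {ι : Type*} {v : ι → V} (hv : Injective v)
    (h0 : ∀ i, v i ≠ 0) : Nat.card ι < Nat.card (Submodule.span F (Set.range v)) := by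
  have h0' : (0 : V) ∉ Set.range v := fun ⟨i, hi⟩ => h0 i hi
  calc Nat.card ι = (Set.range v).ncard := (Set.ncard_range_of_injective hv).symm
    _ < (insert 0 (Set.range v)).ncard := by rw [Set.ncard_insert_of_notMem h0']; omega
    _ ≤ (Submodule.span F (Set.range v) : Set V).ncard :=
      Set.ncard_le_ncard (Set.insert_subset (Submodule.zero_mem _) Submodule.subset_span)
    _ = Nat.card (Submodule.span F (Set.range v)) := (Nat.card_coe_set_eq _).symm

end Counting

section EvenCheck

variable (F : Type*) {E : Type*} [Field F] [Field E] [Algebra F E] {n : ℕ}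

noncomputable def evenCheck (v : Fin n → E) : (Fin n → F) →ₗ[F] E × F :=
  (Fintype.linearCombination F v).prod (sumCoords F n)

variable {F}

theorem sumCoords_apply (c : Fin n → F) : sumCoords F n c = ∑ j, c j := by
  simp [sumCoords]

theorem evenCheck_apply (v : Fin n → E) (c : Fin n → F) :
    evenCheck F v c = (∑ j, c j • v j, ∑ j, c j) := by
  simp [evenCheck, Fintype.linearCombination_apply, sumCoords_apply]

theorem evenCheck_single (v : Fin n → E) (i : Fin n) (a : F) :
    evenCheck F v (Pi.single i a) = (a • v i, a) := by
  simp [evenCheck, sumCoords_apply]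

theorem bchCodeEven_two (n : ℕ) (β : E) :
    bchCodeEven F E n β 2 = LinearMap.ker (evenCheck F fun j : Fin n => β ^ (j : ℕ)) := by
  ext c
  simp [bchCodeEven, bchCode, bchCheck, evenCheck_apply, sumCoords_apply]

theorem range_evenCheck (v : Fin n → E) (hv : Submodule.span F (Set.range v) = ⊤)
    (hsum : ∑ j, v j = 0) (hn : (n : F) ≠ 0) : LinearMap.range (evenCheck F v) = ⊤ := by
  rw [LinearMap.range_eq_top]
  rintro ⟨y, t⟩
  obtain ⟨c, rfl⟩ : y ∈ LinearMap.range (Fintype.linearCombination F v) := by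
    simp [Fintype.range_linearCombination, hv]
  -- adding a multiple of the all-ones word only moves the second coordinate
  refine ⟨c + ((t - ∑ j, c j) / n) • fun _ => 1, ?_⟩
  have hone : evenCheck F v (fun _ => 1) = (0, (n : F)) := by simp [evenCheck_apply, hsum]
  rw [map_add, map_smul, hone, evenCheck_apply, Fintype.linearCombination_apply]
  ext <;> simp [hn]

theorem finrank_ker_evenCheck [FiniteDimensional F E] (v : Fin n → E)
    (hv : Submodule.span F (Set.range v) = ⊤) (hsum : ∑ j, v j = 0) (hn : (n : F) ≠ 0) :
    finrank F (LinearMap.ker (evenCheck F v)) = n - (finrank F E + 1) := by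
  have h := LinearMap.finrank_range_add_finrank_ker (evenCheck F v)
  rw [range_evenCheck v hv hsum hn, finrank_top, finrank_prod, finrank_self,
    finrank_fin_fun] at h
  omega

theorem three_le_hammingNorm_of_mem_ker_evenCheck [DecidableEq F] {v : Fin n → E}
    (hv : Injective v) {c : Fin n → F} (hc : c ∈ LinearMap.ker (evenCheck F v)) (hc0 : c ≠ 0) :
    3 ≤ hammingNorm c := by
  rw [LinearMap.mem_ker, evenCheck_apply, Prod.mk_eq_zero] at hc
  obtain ⟨hcv, hcs⟩ := hc
  have hsupp_v : ∑ j with c j ≠ 0, c j • v j = 0 :=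
    (sum_filter_of_ne fun _ _ h => left_ne_zero_of_smul h).trans hcv
  have hsupp_s : ∑ j with c j ≠ 0, c j = 0 := (sum_filter_ne_zero _).trans hcs
  have hpos : 0 < hammingNorm c := hammingNorm_pos_iff.2 hc0
  by_contra! hlt
  unfold hammingNorm at hpos hlt
  interval_cases h : #{j | c j ≠ 0}
  · obtain ⟨i, hi⟩ := card_eq_one.1 h
    have hci : c i ≠ 0 := by simpa using hi.ge (mem_singleton_self i)
    simp [hi, hci] at hsupp_s
  · obtain ⟨i, j, hij, hs⟩ := card_eq_two.1 h
    have hci : c i ≠ 0 := by simpa using hs.ge (mem_insert_self i {j})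
    rw [hs, sum_pair hij] at hsupp_v hsupp_s
    have hcj : c j = -c i := by linear_combination hsupp_s
    rw [hcj, neg_smul, ← sub_eq_add_neg, ← smul_sub, smul_eq_zero, sub_eq_zero] at hsupp_v
    exact hsupp_v.elim hci (hij ∘ @hv i j)

theorem exists_pairs_sub_eq_smul_sub [Finite E] {v : Fin n → E} (hv : Injective v)
    (hcard : Nat.card (Projectivization F E) < n.choose 2) :
    ∃ a b : Fin n × Fin n, a.1 < a.2 ∧ b.1 < b.2 ∧ a ≠ b ∧
      ∃ t : F, v b.1 - v b.2 = t • (v a.1 - v a.2) := by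
  have hdiff (x : {x : Fin n × Fin n // x.1 < x.2}) : v x.1.1 - v x.1.2 ≠ 0 :=
    sub_ne_zero.2 (hv.ne x.2.ne)
  have hnoninj : ¬Injective fun x => Projectivization.mk F _ (hdiff x) := fun hinj => by
    have := Nat.card_le_card_of_injective _ hinj
    rw [Nat.card_eq_fintype_card, Fintype.card_subtype, Fintype.card_product_filter_lt,
      Fintype.card_fin] at this
    omega
  obtain ⟨x, y, hxy, hne⟩ := not_injective_iff.1 hnoninj
  obtain ⟨t, ht⟩ := (Projectivization.mk_eq_mk_iff' F _ _ _ _).1 hxy.symm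
  exact ⟨x, y, x.2, y.2, Subtype.coe_injective.ne hne, t, ht.symm⟩

theorem exists_mem_ker_evenCheck_hammingNorm_le_four [DecidableEq F] {v : Fin n → E}
    {a b : Fin n × Fin n} (ha : a.1 < a.2) (hb : b.1 < b.2) (hab : a ≠ b) {t : F}
    (ht : v b.1 - v b.2 = t • (v a.1 - v a.2)) :
    ∃ c ∈ LinearMap.ker (evenCheck F v), c ≠ 0 ∧ hammingNorm c ≤ 4 := by
  set c : Fin n → F :=
    (Pi.single b.1 1 - Pi.single b.2 1) - t • (Pi.single a.1 1 - Pi.single a.2 1)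
  refine ⟨c, ?_, ?_, ?_⟩
  · simp [c, evenCheck_single, ← ht]
  · intro h0
    have hb12 : b.1 ≠ b.2 := hb.ne
    -- `c` vanishes at `b.1` and `b.2` only if `{b.1, b.2} = {a.1, a.2}`, i.e. `a = b`
    have h1 := congrFun h0 b.1
    have h2 := congrFun h0 b.2
    simp only [c, Pi.sub_apply, Pi.smul_apply, Pi.single_apply, Pi.zero_apply] at h1 h2
    split_ifs at h1 h2 <;> simp_all [Prod.ext_iff, lt_asymm]
  · calc hammingNorm c ≤ #{b.1, b.2, a.1, a.2} := card_le_card fun j hj => by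
          contrapose! hj
          simp_all [c, Pi.single_apply]
      _ ≤ 4 := card_le_four

end EvenCheck

theorem pow_pred_lt_div_pow_sub_one {q m : ℕ} (hq : 2 ≤ q) (hm : 2 ≤ m) :
    q ^ (m - 1) < (q ^ m - 1) / (q - 1) := by
  obtain ⟨k, rfl⟩ : ∃ k, m = k + 2 := ⟨m - 2, by omega⟩
  rw [← Nat.geomSum_eq hq, sum_range_succ, sum_range_succ', pow_zero]
  simp

theorem cast_div_pow_sub_one_eq_one {R : Type*} [Semiring R] {q m : ℕ} (hq : 2 ≤ q)
    (hm : m ≠ 0) (hq0 : (q : R) = 0) : (((q ^ m - 1) / (q - 1) : ℕ) : R) = 1 := by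
  rw [← Nat.geomSum_eq hq, Nat.cast_sum, sum_congr rfl fun t _ => Nat.cast_pow q t, hq0,
    zero_geom_sum, if_neg hm]

theorem IsPrimitiveRoot.injective_fin_pow {M : Type*} [CommMonoid M] {β : M} {n : ℕ}
    (hβ : IsPrimitiveRoot β n) : Injective fun j : Fin n => β ^ (j : ℕ) :=
  fun i j h => Fin.ext (hβ.pow_inj i.2 j.2 h)

theorem IsPrimitiveRoot.span_range_fin_pow_eq_top {F E : Type*} [Field F] [Field E]
    [Algebra F E] [Finite F] [FiniteDimensional F E] {β : E} {n : ℕ}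
    (hβ : IsPrimitiveRoot β n) (hn : Nat.card F ^ (finrank F E - 1) ≤ n) :
    Submodule.span F (Set.range fun j : Fin n => β ^ (j : ℕ)) = ⊤ := by
  have : Finite E := Module.finite_of_finite F
  have hn0 : n ≠ 0 := ((pow_pos Finite.card_pos _).trans_le hn).ne'
  refine Submodule.eq_top_of_pow_finrank_pred_lt_card _ (hn.trans_lt ?_)
  simpa using card_lt_card_span_range (F := F) hβ.injective_fin_pow
    fun j => pow_ne_zero _ (hβ.ne_zero hn0)

theorem Nat.lt_choose_two {n : ℕ} (hn : 4 ≤ n) : n < n.choose 2 := by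
  have : n * 3 ≤ n * (n - 1) := Nat.mul_le_mul_left n (by omega)
  rw [Nat.choose_two_right]
  omega

theorem Nat.exists_isLeast_between {S : Set ℕ} {a b w : ℕ} (hlow : ∀ x ∈ S, a ≤ x)
    (hw : w ∈ S) (hwb : w ≤ b) : ∃ d, IsLeast S d ∧ a ≤ d ∧ d ≤ b :=
  ⟨sInf S, ⟨Nat.sInf_mem ⟨w, hw⟩, fun _ hx => Nat.sInf_le hx⟩, hlow _ (Nat.sInf_mem ⟨w, hw⟩),
    (Nat.sInf_le hw).trans hwb⟩

theorem stmt6 (q m n : ℕ) (hq : 3 ≤ q) (hm : 2 ≤ m) (hn : n = (q ^ m - 1) / (q - 1))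
    (F E : Type*) [Field F] [Fintype F] [DecidableEq F] [Field E] [Fintype E]
    [Algebra F E] (hF : Fintype.card F = q) (hE : Fintype.card E = q ^ m)
    (α : E) (hα : orderOf α = q ^ m - 1) (β : E) (hβ : β = α ^ (q - 1)) :
    Module.finrank F ↥(bchCodeEven F E n β 2) = n - m - 1 ∧
      ∃ d : ℕ,
        IsLeast {w : ℕ | ∃ c ∈ bchCodeEven F E n β 2, c ≠ 0 ∧ hammingNorm c = w} d ∧
        3 ≤ d ∧ d ≤ 4 := by
  have hn_gt : q ^ (m - 1) < n := hn ▸ pow_pred_lt_div_pow_sub_one (by omega) hm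
  have hn4 : 4 ≤ n := by have := Nat.le_self_pow (by omega : m - 1 ≠ 0) q; omega
  have hfinrank : finrank F E = m := by
    have h := Module.card_eq_pow_finrank (K := F) (V := E)
    rw [hE, hF] at h
    exact (Nat.pow_right_injective (by omega) h).symm
  have hβ_prim : IsPrimitiveRoot β n := by
    rw [hn, hβ]
    exact (hα ▸ IsPrimitiveRoot.orderOf α).pow_of_dvd (by omega)
      (Nat.sub_one_dvd_pow_sub_one q m)
  have hv_span := hβ_prim.span_range_fin_pow_eq_top (F := F)
    (by rw [Nat.card_eq_fintype_card, hF, hfinrank]; omega)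
  have hv_sum : ∑ j : Fin n, β ^ (j : ℕ) = 0 := by
    rw [Fin.sum_univ_eq_sum_range (β ^ ·)]
    exact hβ_prim.geom_sum_eq_zero (by omega)
  have hn_cast : (n : F) = 1 :=
    hn ▸ cast_div_pow_sub_one_eq_one (by omega) (by omega) (hF ▸ FiniteField.cast_card_eq_zero F)
  have hcard : Nat.card (Projectivization F E) < n.choose 2 := by
    rw [Projectivization.card'', Nat.card_eq_fintype_card, Nat.card_eq_fintype_card, hE, hF, ← hn]
    exact Nat.lt_choose_two hn4
  rw [bchCodeEven_two]
  refine ⟨by rw [finrank_ker_evenCheck _ hv_span hv_sum (by simp [hn_cast]), hfinrank]; omega, ?_⟩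
  obtain ⟨a, b, ha, hb, hab, t, ht⟩ := exists_pairs_sub_eq_smul_sub hβ_prim.injective_fin_pow hcard
  obtain ⟨c, hc, hc0, hc4⟩ :=
    exists_mem_ker_evenCheck_hammingNorm_le_four (v := fun j : Fin n => β ^ (j : ℕ)) ha hb hab ht
  refine Nat.exists_isLeast_between ?_ ⟨c, hc, hc0, rfl⟩ hc4
  rintro _ ⟨c', hc', hc0', rfl⟩
  exact three_le_hammingNorm_of_mem_ker_evenCheck hβ_prim.injective_fin_pow hc' hc0'
end

section
/- Let m ≥ 3 be odd and let a, b ∈ GF(3^m) with (a, b) ≠ (0, 0). Consider the quadratic form Q_{a,b}(x) = Tr(a·x^{3^{(m−1)/2}+1} + b·x^{3^{(m−3)/2}+1}) from GF(3^m) to GF(3) and its associated symmetric bilinear form B_{a,b}(x, y) = Q_{a,b}(x + y) − Q_{a,b}(x) − Q_{a,b}(y). Then the radical {x ∈ GF(3^m) : B_{a,b}(x, y) = 0 for all y ∈ GF(3^m)} is a GF(3)-subspace of dimension at most 3; equivalently, the rank r_{a,b} of Q_{a,b} (defined as m minus the GF(3)-dimension of the radical) lies in {m, m−1, m−2, m−3}.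 -/
/-!
Write `q = 3` and `m = 2d + 3`. For the trace form, the adjoint of `y ↦ y ^ q ^ e` is
`y ↦ y ^ q ^ (m - e)`, so `B x y = Tr (L x * y)` for the `𝔽₃`-linear map
`L x = a x^{q^{d+1}} + a^{q^{d+2}} x^{q^{d+2}} + b x^{q^d} + b^{q^{d+3}} x^{q^{d+3}}`,
and nondegeneracy of the trace form makes the radical equal to `ker L`. Raising `L x` to the
power `q^{d+3}` and reducing exponents with `x^{q^m} = x` shows that every element of `ker L` is
a root of the nonzero polynomial
`b^{q^{d+3}} X + a^{q^{d+3}} X^q + a^{q^2} X^{q^2} + b^{q^3} X^{q^3}`, so the subspace `ker L` has at most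
`q^3` elements.
-/

open Polynomial FiniteField

section FrobeniusTrace

variable {K L : Type*} [Field K] [Fintype K] [Field L] [Algebra K L]

local notation "q" => Fintype.card K

theorem frobeniusAlgHom_pow_apply (n : ℕ) (x : L) :
    (frobeniusAlgHom K L ^ n) x = x ^ q ^ n := by
  rw [AlgHom.coe_pow, coe_frobeniusAlgHom, pow_iterate]

theorem add_pow_card_pow (n : ℕ) (x y : L) : (x + y) ^ q ^ n = x ^ q ^ n + y ^ q ^ n := by
  simpa only [frobeniusAlgHom_pow_apply] using map_add (frobeniusAlgHom K L ^ n) x y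

theorem add_pow_card_pow_add_one_sub (n : ℕ) (x y : L) :
    (x + y) ^ (q ^ n + 1) - x ^ (q ^ n + 1) - y ^ (q ^ n + 1) = x ^ q ^ n * y + x * y ^ q ^ n := by
  rw [pow_succ, add_pow_card_pow, pow_succ, pow_succ]
  ring

variable [Finite L]

theorem trace_pow_card_pow (n : ℕ) (x : L) :
    Algebra.trace K L (x ^ q ^ n) = Algebra.trace K L x := by
  have := Algebra.trace_eq_of_algEquiv (frobeniusAlgEquivOfAlgebraic K L ^ n) x
  rwa [AlgEquiv.coe_pow, coe_frobeniusAlgEquivOfAlgebraic_iterate] at this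

end FrobeniusTrace

theorem FiniteField.pow_pow_add_of_card_eq {F : Type*} [Field F] [Fintype F] {n m : ℕ}
    (hF : Fintype.card F = n ^ m) (k : ℕ) (x : F) : x ^ n ^ (m + k) = x ^ n ^ k := by
  rw [pow_add, pow_mul, ← hF, FiniteField.pow_card]

section FiniteExtension

variable {K L : Type*} [Field K] [Fintype K] [Field L] [Fintype L] [Algebra K L]

local notation "q" => Fintype.card K

theorem forall_trace_mul_eq_zero_iff {u : L} : (∀ y, Algebra.trace K L (u * y) = 0) ↔ u = 0 :=
  ⟨(traceForm_nondegenerate K L).1 u, fun hu y => by rw [hu, zero_mul, map_zero]⟩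

theorem Submodule.ncard_eq_card_pow_finrank (S : Submodule K L) :
    (S : Set L).ncard = q ^ Module.finrank K S := by
  rw [← Nat.card_coe_set_eq, Module.natCard_eq_pow_finrank (K := K), Nat.card_eq_fintype_card]
  rfl

theorem Submodule.card_pow_finrank_le_natDegree (S : Submodule K L) {f : L[X]} (hf : f ≠ 0)
    (hS : ∀ x ∈ S, f.IsRoot x) : q ^ Module.finrank K S ≤ f.natDegree := by
  classical
  rw [← S.ncard_eq_card_pow_finrank, Set.ncard_eq_toFinset_card']
  refine card_le_degree_of_subset_roots fun x hx => ?_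
  rw [mem_roots hf]
  exact hS x (by simpa using hx)

variable {m : ℕ} (hL : Fintype.card L = Fintype.card K ^ m)
include hL

theorem trace_mul_pow_card_pow {e : ℕ} (he : e ≤ m) (u y : L) :
    Algebra.trace K L (u * y ^ q ^ e) = Algebra.trace K L (u ^ q ^ (m - e) * y) := by
  have hy : (y ^ q ^ e) ^ q ^ (m - e) = y := by
    rw [← pow_mul, ← pow_add, Nat.add_sub_cancel' he, ← hL, FiniteField.pow_card]
  rw [← trace_pow_card_pow (m - e) (u * _), mul_pow, hy]

theorem trace_polarization {e : ℕ} (he : e ≤ m) (c x y : L) :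
    Algebra.trace K L (c * (x + y) ^ (q ^ e + 1)) - Algebra.trace K L (c * x ^ (q ^ e + 1))
      - Algebra.trace K L (c * y ^ (q ^ e + 1))
      = Algebra.trace K L ((c * x ^ q ^ e + c ^ q ^ (m - e) * x ^ q ^ (m - e)) * y) := by
  rw [← map_sub, ← map_sub, ← mul_sub, ← mul_sub, add_pow_card_pow_add_one_sub, mul_add, map_add,
    ← mul_assoc c x, trace_mul_pow_card_pow hL he, mul_pow, ← map_add, add_mul, mul_assoc c]

end FiniteExtension

section RadicalPoly

variable {L : Type*} [Field L] (q : ℕ) (a b : L) (d : ℕ)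

noncomputable def radicalPoly : L[X] :=
  C (b ^ q ^ (d + 3)) * X + C (a ^ q ^ (d + 3)) * X ^ q + C (a ^ q ^ 2) * X ^ q ^ 2
    + C (b ^ q ^ 3) * X ^ q ^ 3

variable {q}

theorem natDegree_radicalPoly_le (hq : 0 < q) : (radicalPoly q a b d).natDegree ≤ q ^ 3 := by
  unfold radicalPoly
  compute_degree
  simp only [max_le_iff]
  exact ⟨Nat.one_le_pow _ _ hq, Nat.le_self_pow (by norm_num) _,
    Nat.pow_le_pow_right hq (by norm_num), le_rfl⟩

theorem radicalPoly_ne_zero (hq : 1 < q) (hab : (a, b) ≠ 0) : radicalPoly q a b d ≠ 0 := by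
  have hq2 : q < q ^ 2 := by nlinarith
  have hq3 : q ^ 2 < q ^ 3 := Nat.pow_lt_pow_right hq (by norm_num)
  have hpow : ∀ c : L, c ^ q ^ (d + 3) = 0 → c = 0 := fun c => (pow_eq_zero_iff (by positivity)).1
  intro h
  by_cases hb : b = 0
  · have : (radicalPoly q a b d).coeff q = a ^ q ^ (d + 3) := by
      simp only [radicalPoly, coeff_add, coeff_C_mul, coeff_X_pow, coeff_X, hq.ne, hq2.ne,
        (hq2.trans hq3).ne, if_true, if_false, mul_one, mul_zero, zero_add, add_zero]
    rw [h, coeff_zero] at this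
    exact hab (Prod.ext (hpow a this.symm) hb)
  · have : (radicalPoly q a b d).coeff 1 = b ^ q ^ (d + 3) := by
      simp only [radicalPoly, coeff_add, coeff_C_mul, coeff_X_pow, coeff_X, hq.ne,
        (hq.trans hq2).ne, (hq.trans (hq2.trans hq3)).ne, if_true, if_false, mul_one, mul_zero,
        add_zero]
    rw [h, coeff_zero] at this
    exact hb (hpow b this.symm)

end RadicalPoly

section RadicalMap

variable (K : Type*) {L : Type*} [Field K] [Fintype K] [Field L] [Algebra K L]

local notation "q" => Fintype.card K

noncomputable def radicalMap (a b : L) (d : ℕ) : L →ₗ[K] L :=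
  LinearMap.mulLeft K a ∘ₗ (frobeniusAlgHom K L ^ (d + 1)).toLinearMap
    + LinearMap.mulLeft K (a ^ q ^ (d + 2)) ∘ₗ (frobeniusAlgHom K L ^ (d + 2)).toLinearMap
    + LinearMap.mulLeft K b ∘ₗ (frobeniusAlgHom K L ^ d).toLinearMap
    + LinearMap.mulLeft K (b ^ q ^ (d + 3)) ∘ₗ (frobeniusAlgHom K L ^ (d + 3)).toLinearMap

variable {K} (a b : L) (d : ℕ)

theorem radicalMap_apply (x : L) :
    radicalMap K a b d x = a * x ^ q ^ (d + 1) + a ^ q ^ (d + 2) * x ^ q ^ (d + 2)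
      + b * x ^ q ^ d + b ^ q ^ (d + 3) * x ^ q ^ (d + 3) := by
  simp only [radicalMap, LinearMap.add_apply, LinearMap.comp_apply, LinearMap.mulLeft_apply,
    AlgHom.toLinearMap_apply, frobeniusAlgHom_pow_apply]

variable [Fintype L] (hL : Fintype.card L = Fintype.card K ^ (2 * d + 3))
include hL

theorem radicalMap_apply_pow_eq_eval (x : L) :
    radicalMap K a b d x ^ q ^ (d + 3) = (radicalPoly q a b d).eval x := by
  simp only [radicalMap_apply, radicalPoly, add_pow_card_pow, mul_pow, ← pow_mul, ← pow_add]
  rw [show d + 1 + (d + 3) = 2 * d + 3 + 1 by omega, show d + 2 + (d + 3) = 2 * d + 3 + 2 by omega,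
    show d + (d + 3) = 2 * d + 3 + 0 by omega, show d + 3 + (d + 3) = 2 * d + 3 + 3 by omega]
  simp only [FiniteField.pow_pow_add_of_card_eq hL]
  simp only [pow_one, pow_zero, eval_add, eval_mul, eval_pow, eval_C, eval_X]
  ring

theorem trace_polarization_eq_trace_radicalMap_mul (x y : L) :
    Algebra.trace K L (a * (x + y) ^ (q ^ (d + 1) + 1) + b * (x + y) ^ (q ^ d + 1))
      - Algebra.trace K L (a * x ^ (q ^ (d + 1) + 1) + b * x ^ (q ^ d + 1))
      - Algebra.trace K L (a * y ^ (q ^ (d + 1) + 1) + b * y ^ (q ^ d + 1))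
      = Algebra.trace K L (radicalMap K a b d x * y) := by
  have hA := trace_polarization hL (show d + 1 ≤ 2 * d + 3 by omega) a x y
  have hB := trace_polarization hL (show d ≤ 2 * d + 3 by omega) b x y
  rw [show 2 * d + 3 - (d + 1) = d + 2 by omega] at hA
  rw [show 2 * d + 3 - d = d + 3 by omega] at hB
  have hsplit : radicalMap K a b d x * y
      = (a * x ^ q ^ (d + 1) + a ^ q ^ (d + 2) * x ^ q ^ (d + 2)) * y
        + (b * x ^ q ^ d + b ^ q ^ (d + 3) * x ^ q ^ (d + 3)) * y := by
    rw [radicalMap_apply]; ring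
  rw [hsplit]
  simp only [map_add]
  linear_combination hA + hB

theorem finrank_ker_radicalMap_le (hab : (a, b) ≠ 0) :
    Module.finrank K (LinearMap.ker (radicalMap K a b d)) ≤ 3 := by
  have hroots : ∀ x ∈ LinearMap.ker (radicalMap K a b d), (radicalPoly q a b d).IsRoot x :=
    fun x hx => by
      rw [IsRoot, ← radicalMap_apply_pow_eq_eval a b d hL, LinearMap.mem_ker.1 hx,
        zero_pow (by positivity)]
  have hcard := (Submodule.card_pow_finrank_le_natDegree _
    (radicalPoly_ne_zero a b d Fintype.one_lt_card hab) hroots).trans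
    (natDegree_radicalPoly_le a b d Fintype.card_pos)
  exact (Nat.pow_le_pow_iff_right Fintype.one_lt_card).1 hcard

end RadicalMap

theorem stmt11 (m : ℕ) (hm : 3 ≤ m) (hmo : Odd m)
    (E : Type*) [Field E] [Fintype E] [Algebra (ZMod 3) E]
    (hE : Fintype.card E = 3 ^ m)
    (a b : E) (hab : (a, b) ≠ ((0 : E), (0 : E)))
    (Q : E → ZMod 3)
    (hQ : ∀ x : E, Q x = Algebra.trace (ZMod 3) E
      (a * x ^ (3 ^ ((m - 1) / 2) + 1) + b * x ^ (3 ^ ((m - 3) / 2) + 1)))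
    (B : E → E → ZMod 3) (hB : ∀ x y : E, B x y = Q (x + y) - Q x - Q y) :
    ∃ k : ℕ, k ≤ 3 ∧ Set.ncard {x : E | ∀ y : E, B x y = 0} = 3 ^ k := by
  obtain ⟨d, rfl⟩ : ∃ d, m = 2 * d + 3 := by
    obtain ⟨t, rfl⟩ := hmo
    exact ⟨t - 1, by omega⟩
  rw [show (2 * d + 3 - 1) / 2 = d + 1 by omega, show (2 * d + 3 - 3) / 2 = d by omega] at hQ
  have hcard : Fintype.card E = Fintype.card (ZMod 3) ^ (2 * d + 3) := by rw [ZMod.card, hE]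
  have hpolar := trace_polarization_eq_trace_radicalMap_mul a b d hcard
  rw [ZMod.card] at hpolar
  have hradical : {x : E | ∀ y : E, B x y = 0} = LinearMap.ker (radicalMap (ZMod 3) a b d) := by
    ext x
    simp only [Set.mem_ofPred_eq, SetLike.mem_coe, LinearMap.mem_ker, hB, hQ, hpolar]
    exact forall_trace_mul_eq_zero_iff
  refine ⟨_, finrank_ker_radicalMap_le a b d hcard hab, ?_⟩
  rw [hradical, Submodule.ncard_eq_card_pow_finrank, ZMod.card]
end
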